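/- arXiv:1208.0538 — 16 statements merged into one kernel-verified Lean document; each statement's English description precedes it below -/
import Mathlib

section
/- In the quotient semiring N[x]/(x = 1 + x^2), the identity x + x^4 = 1 + x^3 holds. -/
open Polynomial

theorem add_pow_four_eq_one_add_pow_three {R : Type*} [CommSemiring R] {x : R}
    (hx : x = 1 + x ^ 2) : x + x ^ 4 = 1 + x ^ 3 :=
  calc x + x ^ 4 = 1 + x ^ 2 + x ^ 4 := by rw [← hx]
    _ = 1 + (1 + x ^ 2) * x ^ 2 := by ring
    _ = 1 + x ^ 3 := by rw [← hx]; ring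

/-- In `ℕ[x]/(x = 1 + x²)`: `x + x⁴ = 1 + x³`. -/
theorem stmt_1 :
    (ringConGen (fun p q : Polynomial ℕ => p = X ∧ q = 1 + X ^ 2))
      (X + X ^ 4) (1 + X ^ 3) := by
  set c := ringConGen (fun p q : Polynomial ℕ => p = X ∧ q = 1 + X ^ 2)
  have hX : ((X : ℕ[X]) : c.Quotient) = 1 + (X : ℕ[X]) ^ 2 :=
    c.eq.mpr (RingConGen.Rel.of _ _ ⟨rfl, rfl⟩)
  refine c.eq.mp ?_
  -- `R` must be given: unification does not see through the quotient's own `One` instance.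
  simpa using add_pow_four_eq_one_add_pow_three (R := c.Quotient) hX
end

section
/- In the quotient semiring N[x]/(x = 1 + x^2), the identity 1 + x^3 + x^3 = x^3 holds. -/
open Polynomial

/-- In `ℕ[x]/(x = 1 + x²)`: `1 + x³ + x³ = x³`. -/
theorem stmt_2 :
    (ringConGen (fun p q : Polynomial ℕ => p = X ∧ q = 1 + X ^ 2))
      (1 + X ^ 3 + X ^ 3) (X ^ 3) := by
  set c := ringConGen (fun p q : Polynomial ℕ => p = X ∧ q = 1 + X ^ 2) with hc
  have hx : c X (1 + X ^ 2) := RingConGen.Rel.of _ _ ⟨rfl, rfl⟩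
  -- x² ≡ x + x³
  have h1 : c (X ^ 2) (X + X ^ 3) := by
    have := c.mul (c.refl X) hx
    rw [show (X : Polynomial ℕ) * X = X ^ 2 by ring,
        show (X : Polynomial ℕ) * (1 + X ^ 2) = X + X ^ 3 by ring] at this
    exact this
  -- x³ ≡ x² + x⁴
  have h2 : c (X ^ 3) (X ^ 2 + X ^ 4) := by
    have := c.mul (c.refl (X ^ 2)) hx
    rw [show (X : Polynomial ℕ) ^ 2 * X = X ^ 3 by ring,
        show (X : Polynomial ℕ) ^ 2 * (1 + X ^ 2) = X ^ 2 + X ^ 4 by ring] at this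
    exact this
  -- 1 + x³ ≡ x(1 + x³)
  have ha : c (1 + X ^ 3) (X * (1 + X ^ 3)) := by
    have s1 : c (1 + X ^ 3) (1 + X ^ 2 + X ^ 4) := by
      have := c.add (c.refl 1) h2
      rw [show (1 : Polynomial ℕ) + (X ^ 2 + X ^ 4) = 1 + X ^ 2 + X ^ 4 by ring] at this
      exact this
    have s2 : c (1 + X ^ 2 + X ^ 4) (X * (1 + X ^ 3)) := by
      have := c.add (c.symm hx) (c.refl (X ^ 4))
      rw [show (X : Polynomial ℕ) + X ^ 4 = X * (1 + X ^ 3) by ring] at this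
      exact this
    exact c.trans s1 s2
  -- 1 + x³ ≡ x²(1 + x³) = x² + x⁵
  have haa : c (1 + X ^ 3) (X ^ 2 + X ^ 5) := by
    have := c.mul (c.refl X) ha
    have t : c (1 + X ^ 3) (X * (X * (1 + X ^ 3))) := c.trans ha this
    rw [show (X : Polynomial ℕ) * (X * (1 + X ^ 3)) = X ^ 2 + X ^ 5 by ring] at t
    exact t
  -- x ≡ x + (1 + x³)
  have habs : c X (X + (1 + X ^ 3)) := by
    have := c.add (c.refl 1) h1
    rw [show (1 : Polynomial ℕ) + (X + X ^ 3) = X + (1 + X ^ 3) by ring] at this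
    exact c.trans hx this
  -- x³ ≡ x³ + (x² + x⁵)
  have habs3 : c (X ^ 3) (X ^ 3 + (X ^ 2 + X ^ 5)) := by
    have := c.mul (c.refl (X ^ 2)) habs
    rw [show (X : Polynomial ℕ) ^ 2 * X = X ^ 3 by ring,
        show (X : Polynomial ℕ) ^ 2 * (X + (1 + X ^ 3)) = X ^ 3 + (X ^ 2 + X ^ 5) by ring]
      at this
    exact this
  -- conclude
  have final : c (1 + X ^ 3 + X ^ 3) (X ^ 3 + (X ^ 2 + X ^ 5)) := by
    have := c.add (c.refl (X ^ 3)) haa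
    rw [show (X : Polynomial ℕ) ^ 3 + (1 + X ^ 3) = 1 + X ^ 3 + X ^ 3 by ring] at this
    exact this
  exact c.trans final (c.symm habs3)
end

section
/- In the quotient semiring N[x]/(x = 1 + x^2), the identity 1 + x^3 + x^4 = x^4 holds. -/
open Polynomial

/-- In `ℕ[x]/(x = 1 + x²)`: `1 + x³ + x⁴ = x⁴`. -/
theorem stmt_3 :
    (ringConGen (fun p q : Polynomial ℕ => p = X ∧ q = 1 + X ^ 2))
      (1 + X ^ 3 + X ^ 4) (X ^ 4) := by
  set c := ringConGen (fun p q : Polynomial ℕ => p = X ∧ q = 1 + X ^ 2) with hc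
  have base : c X (1 + X ^ 2) := RingConGen.Rel.of _ _ ⟨rfl, rfl⟩
  -- multiply base by powers of X
  have h2 : c (X ^ 2) (X + X ^ 3) := by
    have := c.mul base (c.refl X)
    convert this using 1 <;> ring
  have h3 : c (X ^ 3) (X ^ 2 + X ^ 4) := by
    have := c.mul base (c.refl (X ^ 2))
    convert this using 1 <;> ring
  have h4 : c (X ^ 4) (X ^ 3 + X ^ 5) := by
    have := c.mul base (c.refl (X ^ 3))
    convert this using 1 <;> ring
  -- x³ + x⁵ = x²(x + x³) ~ x²·x² = x⁴
  have h5 : c (X ^ 3 + X ^ 5) (X ^ 4) := by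
    have := c.mul (c.refl (X ^ 2)) h2.symm
    convert this using 1 <;> ring
  -- chain
  have s1 : c (1 + X ^ 3 + X ^ 4) (1 + X ^ 2 + X ^ 4 + X ^ 4) := by
    have := c.add (c.add (c.refl 1) h3) (c.refl (X ^ 4))
    convert this using 1; ring
  have s2 : c (1 + X ^ 2 + X ^ 4 + X ^ 4) (X + X ^ 4 + X ^ 4) := by
    have := c.add (c.add base.symm (c.refl (X ^ 4))) (c.refl (X ^ 4))
    convert this using 1
  have s3 : c (X + X ^ 4 + X ^ 4) (X + (X ^ 3 + X ^ 5) + X ^ 4) :=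
    c.add (c.add (c.refl X) h4) (c.refl (X ^ 4))
  have s4 : c (X + (X ^ 3 + X ^ 5) + X ^ 4) (X ^ 2 + X ^ 5 + X ^ 4) := by
    have := c.add (c.add h2.symm (c.refl (X ^ 5))) (c.refl (X ^ 4))
    convert this using 1; ring
  have s5 : c (X ^ 2 + X ^ 5 + X ^ 4) (X ^ 3 + X ^ 5) := by
    have := c.add h3.symm (c.refl (X ^ 5))
    convert this using 1; ring
  exact (((((s1.trans s2).trans s3).trans s4).trans s5).trans h5)
end

section
/- In the quotient semiring N[x]/(x = 1 + x + x^2), the identity x^4 = 1 + 1 + x^2 holds. -/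
open Polynomial

/-- In `ℕ[x]/(x = 1 + x + x²)`: `x⁴ = 1 + 1 + x²`. -/
theorem stmt_4 :
    (ringConGen (fun p q : Polynomial ℕ => p = X ∧ q = 1 + X + X ^ 2))
      (X ^ 4) (1 + 1 + X ^ 2) := by
  set rel := fun p q : Polynomial ℕ => p = X ∧ q = 1 + X + X ^ 2 with hrel
  show RingConGen.Rel rel (X ^ 4) (1 + 1 + X ^ 2)
  have hx : RingConGen.Rel rel X (1 + X + X ^ 2) :=
    RingConGen.Rel.of _ _ ⟨rfl, rfl⟩
  have key : ∀ c d : Polynomial ℕ,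
      RingConGen.Rel rel (c + X * d) (c + (1 + X + X ^ 2) * d) := fun c d =>
    RingConGen.Rel.add (RingConGen.Rel.refl c)
      (RingConGen.Rel.mul hx (RingConGen.Rel.refl d))
  have step : ∀ a b c d : Polynomial ℕ, a = c + X * d → b = c + (1 + X + X ^ 2) * d →
      RingConGen.Rel rel a b := by
    rintro a b c d rfl rfl; exact key c d
  refine RingConGen.Rel.trans (step _ (X^3 + X^4 + X^5) 0 (X^3) (by ring) (by ring)) ?_
  refine RingConGen.Rel.trans
    (step _ (X^2 + X^3 + 2*X^4 + X^5) (X^4 + X^5) (X^2) (by ring) (by ring)) ?_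
  refine RingConGen.Rel.trans
    (step _ (X + X^2 + 2*X^3 + 2*X^4 + X^5) (X^3 + 2*X^4 + X^5) X (by ring) (by ring)) ?_
  refine RingConGen.Rel.trans
    (step _ (1 + X + 2*X^2 + 2*X^3 + 2*X^4 + X^5) (X^2 + 2*X^3 + 2*X^4 + X^5) 1
      (by ring) (by ring)) ?_
  refine RingConGen.Rel.trans
    (step _ (2 + X + 3*X^2 + 2*X^3 + 2*X^4 + X^5) (1 + 2*X^2 + 2*X^3 + 2*X^4 + X^5) 1
      (by ring) (by ring)) ?_
  refine RingConGen.Rel.trans (RingConGen.Rel.symm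
    (step (2 + X + 2*X^2 + 2*X^3 + X^4 + X^5) _ (2 + X + 2*X^2 + X^3 + X^4 + X^5) (X^2)
      (by ring) (by ring))) ?_
  refine RingConGen.Rel.trans (RingConGen.Rel.symm
    (step (2 + X + 2*X^2 + X^3 + X^4) _ (2 + X + 2*X^2 + X^3) (X^3)
      (by ring) (by ring))) ?_
  refine RingConGen.Rel.trans (RingConGen.Rel.symm
    (step (2 + X + X^2 + X^3) _ (2 + X + X^2) (X^2) (by ring) (by ring))) ?_
  exact RingConGen.Rel.symm (step (1 + 1 + X^2) _ 2 X (by ring) (by ring))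
end

section
/- In the quotient semiring N[x]/(x = 1 + x + x^2), the identity x + x^3 = 1 + x^2 holds. -/
open Polynomial

/-- In `ℕ[x]/(x = 1 + x + x²)`: `x + x³ = 1 + x²`. -/
theorem stmt_5 :
    (ringConGen (fun p q : Polynomial ℕ => p = X ∧ q = 1 + X + X ^ 2))
      (X + X ^ 3) (1 + X ^ 2) := by
  set r := fun p q : Polynomial ℕ => p = X ∧ q = 1 + X + X ^ 2 with hr
  have h : RingConGen.Rel r X (1 + X + X ^ 2) := .of _ _ ⟨rfl, rfl⟩
  have h2 : RingConGen.Rel r (X ^ 2) (X + X ^ 2 + X ^ 3) := by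
    have := RingConGen.Rel.mul (.refl X) h
    have e1 : (X : Polynomial ℕ) * X = X ^ 2 := by ring
    have e2 : (X : Polynomial ℕ) * (1 + X + X ^ 2) = X + X ^ 2 + X ^ 3 := by ring
    rwa [e1, e2] at this
  have h3 : RingConGen.Rel r (X + X ^ 3) ((1 + X + X ^ 2) + X ^ 3) :=
    .add h (.refl _)
  have e3 : ((1 : Polynomial ℕ) + X + X ^ 2) + X ^ 3 = 1 + (X + X ^ 2 + X ^ 3) := by ring
  have h4 : RingConGen.Rel r (1 + (X + X ^ 2 + X ^ 3)) (1 + X ^ 2) :=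
    .add (.refl 1) (.symm h2)
  exact .trans (e3 ▸ h3) h4
end

section
/- In the quotient semiring N[x]/(x = 1 + x + x^2), for each n with 1 ≤ n ≤ 3, the identity 1 + x^2 + x^n = x^n holds. -/
/-!
The identity holds for every `n ≥ 1`, by induction on `n`. The case `n = 1` is the defining
relation read backwards. Multiplying the relation by `xⁿ` gives
`xⁿ⁺¹ ~ xⁿ + xⁿ⁺¹ + xⁿ⁺²`, so `1 + x² + xⁿ⁺¹ ~ (1 + x² + xⁿ) + xⁿ⁺¹ + xⁿ⁺²`, and the
induction hypothesis absorbs `1 + x²` into `xⁿ`.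
-/

open Polynomial

theorem RingCon.one_add_sq_add_pow {R : Type*} [CommSemiring R] (c : RingCon R) {x : R}
    (hx : c x (1 + x + x ^ 2)) {n : ℕ} (hn : 1 ≤ n) : c (1 + x ^ 2 + x ^ n) (x ^ n) := by
  induction n, hn using Nat.le_induction with
  | base =>
    rw [pow_one, add_right_comm]
    exact c.symm hx
  | succ n _ ih =>
    have hstep : c (x ^ (n + 1)) (x ^ n + x ^ (n + 1) + x ^ (n + 2)) := by
      convert c.mul (c.refl (x ^ n)) hx using 1 <;> ring
    have hexpand : c (1 + x ^ 2 + x ^ (n + 1)) (1 + x ^ 2 + x ^ n + x ^ (n + 1) + x ^ (n + 2)) := by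
      convert c.add (c.refl (1 + x ^ 2)) hstep using 1
      ring
    have habsorb : c (1 + x ^ 2 + x ^ n + x ^ (n + 1) + x ^ (n + 2))
        (x ^ n + x ^ (n + 1) + x ^ (n + 2)) :=
      c.add (c.add ih (c.refl _)) (c.refl _)
    exact c.trans hexpand (c.trans habsorb (c.symm hstep))

/-- In `ℕ[x]/(x = 1 + x + x²)`: for `1 ≤ n ≤ 3`, `1 + x² + xⁿ = xⁿ`. -/
theorem stmt_6 :
    ∀ n : ℕ, 1 ≤ n → n ≤ 3 →
      (ringConGen (fun p q : Polynomial ℕ => p = X ∧ q = 1 + X + X ^ 2))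
        (1 + X ^ 2 + X ^ n) (X ^ n) :=
  fun _ hn _ => RingCon.one_add_sq_add_pow _ (RingConGen.Rel.of _ _ ⟨rfl, rfl⟩) hn
end

section
/- Every semiring congruence on the semiring N of natural numbers is generated by a single pair (n, m); that is, for any semiring congruence ρ on N there exist natural numbers n, m such that ρ is the smallest congruence containing (n, m). -/
/-!
A congruence `c` on the additive monoid `ℕ` is determined by two numbers. The index `r` is the
least `x` related to some `x + d` with `d > 0`, and the period `m` is the least such `d` for
`x = r`. Relations propagate upwards (`c x (x + d)` gives `c (x + t) (x + t + d)`), and a positive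
period at `r` lets every period found higher up be transported down to `r`; minimality of `m`
then forces every period to be a multiple of `m`. Hence `c x y ↔ x = y ∨ (r ≤ x, r ≤ y and
x ≡ y [MOD m])`, which is exactly the congruence generated by the single pair `(r, r + m)`, even
as a semiring congruence.
-/

namespace AddCon

variable (c : AddCon ℕ)

-- Both are `sInf ∅ = 0` for the equality congruence, which is then generated by `(0, 0)`.
noncomputable def natIndex : ℕ := sInf {x | ∃ d, 0 < d ∧ c x (x + d)}
noncomputable def natPeriod : ℕ := sInf {d | 0 < d ∧ c c.natIndex (c.natIndex + d)}

variable {c}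

theorem rel_add_of_le {x y d : ℕ} (h : c x (x + d)) (hxy : x ≤ y) : c y (y + d) := by
  obtain ⟨t, rfl⟩ := Nat.exists_eq_add_of_le hxy
  simpa only [add_right_comm x d t] using c.add h (c.refl t)

theorem rel_add_mul {x d : ℕ} (h : c x (x + d)) (k : ℕ) : c x (x + k * d) := by
  induction k with
  | zero => simpa using c.refl x
  | succ k ih =>
    have hstep : c (x + k * d) (x + k * d + d) := rel_add_of_le h (Nat.le_add_right x _)
    rw [add_one_mul, ← add_assoc]
    exact c.trans ih hstep

theorem rel_add_of_rel_add_of_pos {r d x e : ℕ} (hd : 0 < d) (hr : c r (r + d))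
    (he : c x (x + e)) : c r (r + e) := by
  -- climb from `r` above `x` in steps of `d`, use `e` there, and come back down in steps of `d`
  have hup : c r (r + x * d) := rel_add_mul hr x
  have hx : x ≤ r + x * d := le_add_left (Nat.le_mul_of_pos_right x hd)
  have htop : c (r + x * d) (r + x * d + e) := rel_add_of_le he hx
  have hdown : c (r + e) (r + e + x * d) := rel_add_of_le (rel_add_mul hr x) (Nat.le_add_right r e)
  rw [add_right_comm] at hdown
  exact c.trans (c.trans hup htop) (c.symm hdown)

theorem rel_of_modEq {r m x y : ℕ} (h : c r (r + m)) (hx : r ≤ x) (hy : r ≤ y)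
    (hxy : x ≡ y [MOD m]) : c x y := by
  wlog hle : x ≤ y generalizing x y
  · exact c.symm (this hy hx hxy.symm (le_of_not_ge hle))
  obtain ⟨k, hk⟩ := (Nat.modEq_iff_dvd' hle).1 hxy
  have := rel_add_mul (rel_add_of_le h hx) k
  rwa [mul_comm, ← hk, Nat.add_sub_cancel' hle] at this

theorem natIndex_le {x d : ℕ} (hd : 0 < d) (h : c x (x + d)) : c.natIndex ≤ x :=
  Nat.sInf_le ⟨d, hd, h⟩

theorem rel_natIndex_add_natPeriod : c c.natIndex (c.natIndex + c.natPeriod) := by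
  by_cases hne : {d | 0 < d ∧ c c.natIndex (c.natIndex + d)}.Nonempty
  · exact (Nat.sInf_mem hne).2
  · rw [natPeriod, Set.not_nonempty_iff_eq_empty.1 hne, Nat.sInf_empty, add_zero]
    exact c.refl _

theorem natPeriod_dvd {e : ℕ} (he : c c.natIndex (c.natIndex + e)) : c.natPeriod ∣ e := by
  set r := c.natIndex
  set m := c.natPeriod
  rcases Nat.eq_zero_or_pos e with rfl | he_pos
  · exact dvd_zero m
  have hm : m ∈ {d | 0 < d ∧ c r (r + d)} := Nat.sInf_mem ⟨e, he_pos, he⟩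
  -- `e % m` is a period at `r + (e / m) * m`, hence at `r`; it is smaller than `m`
  have hmod : c (r + e / m * m) (r + e / m * m + e % m) := by
    rw [add_assoc, Nat.div_add_mod']
    exact c.trans (c.symm (rel_add_mul hm.2 _)) he
  have hrmod : c r (r + e % m) := rel_add_of_rel_add_of_pos hm.1 hm.2 hmod
  by_contra hndvd
  have hpos : 0 < e % m := Nat.pos_of_ne_zero (mt Nat.dvd_of_mod_eq_zero hndvd)
  exact absurd (Nat.sInf_le ⟨hpos, hrmod⟩ : m ≤ e % m) (not_le.2 (Nat.mod_lt e hm.1))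

theorem natIndex_le_and_natPeriod_dvd {x d : ℕ} (hd : 0 < d) (h : c x (x + d)) :
    c.natIndex ≤ x ∧ c.natPeriod ∣ d := by
  have hr : c.natIndex ∈ {x | ∃ d, 0 < d ∧ c x (x + d)} := Nat.sInf_mem ⟨x, d, hd, h⟩
  obtain ⟨d₀, hd₀, hr⟩ := hr
  exact ⟨natIndex_le hd h, natPeriod_dvd (rel_add_of_rel_add_of_pos hd₀ hr h)⟩

theorem nat_rel_iff {x y : ℕ} :
    c x y ↔ x = y ∨ (c.natIndex ≤ x ∧ c.natIndex ≤ y ∧ x ≡ y [MOD c.natPeriod]) := by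
  refine ⟨fun h ↦ ?_, ?_⟩
  · wlog hle : x ≤ y generalizing x y
    · rcases this (c.symm h) (le_of_not_ge hle) with rfl | ⟨hy, hx, hyx⟩
      exacts [Or.inl rfl, Or.inr ⟨hx, hy, hyx.symm⟩]
    obtain ⟨d, rfl⟩ := Nat.exists_eq_add_of_le hle
    rcases Nat.eq_zero_or_pos d with rfl | hd
    · exact Or.inl rfl
    obtain ⟨hx, hdvd⟩ := natIndex_le_and_natPeriod_dvd hd h
    exact Or.inr ⟨hx, hx.trans hle, (Nat.modEq_iff_dvd' hle).2 (by simpa using hdvd)⟩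
  · rintro (rfl | ⟨hx, hy, hxy⟩)
    exacts [c.refl x, rel_of_modEq rel_natIndex_add_natPeriod hx hy hxy]

end AddCon

/-- Every semiring congruence on `ℕ` is generated by a single pair. -/
theorem stmt_7 (ρ : RingCon ℕ) :
    ∃ n m : ℕ, ρ = ringConGen (fun a b : ℕ => a = n ∧ b = m) := by
  set r := ρ.toAddCon.natIndex
  set m := ρ.toAddCon.natPeriod
  set σ := ringConGen (fun a b : ℕ => a = r ∧ b = r + m)
  have hσ : σ r (r + m) := RingConGen.Rel.of _ _ ⟨rfl, rfl⟩
  refine ⟨r, r + m, le_antisymm (fun x y h ↦ ?_) (RingCon.ringConGen_le.2 ?_)⟩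
  · rcases AddCon.nat_rel_iff.1 (show ρ.toAddCon x y from h) with rfl | ⟨hx, hy, hxy⟩
    exacts [σ.refl x, AddCon.rel_of_modEq (c := σ.toAddCon) hσ hx hy hxy]
  · rintro _ _ ⟨rfl, rfl⟩
    exact AddCon.rel_natIndex_add_natPeriod
end

section
/- The semiring N of natural numbers is congruence-Noetherian: every ascending chain of semiring congruences on N stabilizes. -/
namespace Stmt8Aux

/-- A congruence is nontrivial if it relates two distinct elements. -/
def Nontriv (c : RingCon ℕ) : Prop := ∃ a d, 0 < d ∧ c a (a + d)

/-- least positive period -/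
noncomputable def mOf (c : RingCon ℕ) : ℕ := sInf {d | 0 < d ∧ ∃ a, c a (a + d)}

/-- least base of a nontrivial pair -/
noncomputable def rOf (c : RingCon ℕ) : ℕ := sInf {a | ∃ d, 0 < d ∧ c a (a + d)}

lemma translate (c : RingCon ℕ) {x y : ℕ} (h : c x y) (t : ℕ) : c (x + t) (y + t) :=
  c.add h (c.refl t)

lemma iterate (c : RingCon ℕ) {a d : ℕ} (h : c a (a + d)) : ∀ N, c a (a + N * d) := by
  intro N
  induction N with
  | zero => simpa using c.refl a
  | succ N ih =>
    have h2 := translate c h (N * d)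
    have : c (a + N * d) (a + (N + 1) * d) := by
      have e1 : a + N * d = a + N * d := rfl
      have e2 : a + d + N * d = a + (N + 1) * d := by ring
      rwa [e2] at h2
    exact c.trans ih this

lemma mOf_mem (c : RingCon ℕ) (h : Nontriv c) :
    0 < mOf c ∧ ∃ a, c a (a + mOf c) := by
  obtain ⟨a, d, hd, hcd⟩ := h
  have : ({d | 0 < d ∧ ∃ a, c a (a + d)}).Nonempty := ⟨d, hd, a, hcd⟩
  exact Nat.sInf_mem this

lemma mOf_min (c : RingCon ℕ) {d : ℕ} (hd : 0 < d) (hw : ∃ a, c a (a + d)) :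
    mOf c ≤ d := Nat.sInf_le ⟨hd, hw⟩

lemma mOf_dvd (c : RingCon ℕ) (h : Nontriv c) :
    ∀ d, 0 < d → (∃ a, c a (a + d)) → mOf c ∣ d := by
  intro d
  induction d using Nat.strong_induction_on with
  | _ d IH =>
    intro hd ⟨a, ha⟩
    obtain ⟨hm, b, hb⟩ := mOf_mem c h
    have hle : mOf c ≤ d := mOf_min c hd ⟨a, ha⟩
    rcases eq_or_lt_of_le hle with heq | hlt
    · exact heq ▸ dvd_refl _
    · -- d - mOf c is a period at base a + b + mOf c
      have h1 : c (a + b) (a + b + d) := by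
        have := translate c ha b
        have e : a + d + b = a + b + d := by ring
        rwa [e, show a + b = a + b from rfl] at this
      have h2 : c (a + b) (a + b + mOf c) := by
        have := translate c hb a
        have e1 : b + a = a + b := by ring
        have e2 : b + mOf c + a = a + b + mOf c := by ring
        rwa [e1, e2] at this
      have h3 : c (a + b + mOf c) (a + b + mOf c + (d - mOf c)) := by
        have := c.trans (c.symm h2) h1
        have e : a + b + d = a + b + mOf c + (d - mOf c) := by omega
        rwa [e] at this
      have hpos : 0 < d - mOf c := by omega
      have hdvd : mOf c ∣ (d - mOf c) := IH (d - mOf c) (by omega) hpos ⟨_, h3⟩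
      have : mOf c ∣ (d - mOf c) + mOf c := Dvd.dvd.add hdvd (dvd_refl _)
      rwa [show d - mOf c + mOf c = d by omega] at this

/-- Key lemma: any base of any positive period is a base of the least period. -/
lemma key (c : RingCon ℕ) (h : Nontriv c) {a d : ℕ} (hd : 0 < d) (ha : c a (a + d)) :
    c a (a + mOf c) := by
  obtain ⟨hm, b, hb⟩ := mOf_mem c h
  set m := mOf c with hmdef
  set N := b + 1 with hN
  have hge : b ≤ a + N * d := by
    have : N ≤ N * d := Nat.le_mul_of_pos_right N hd
    omega
  have h1 : c a (a + N * d) := iterate c ha N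
  have h2 : c (a + N * d) (a + N * d + m) := by
    have := translate c hb (a + N * d - b)
    have e1 : b + (a + N * d - b) = a + N * d := by omega
    have e2 : b + m + (a + N * d - b) = a + N * d + m := by omega
    rwa [e1, e2] at this
  have h3 : c a (a + N * d + m) := c.trans h1 h2
  have h4 : c (a + m) (a + m + N * d) := by
    have h5 : c (a + m) (a + m + d) := by
      have := translate c ha m
      have e : a + d + m = a + m + d := by ring
      rwa [e] at this
    exact iterate c h5 N
  have h6 : c a (a + m) := by
    have e : a + m + N * d = a + N * d + m := by ring
    rw [e] at h4
    exact c.trans h3 (c.symm h4)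
  exact h6

lemma rOf_mem (c : RingCon ℕ) (h : Nontriv c) :
    ∃ d, 0 < d ∧ c (rOf c) (rOf c + d) := by
  obtain ⟨a, d, hd, hcd⟩ := h
  have hne : ({a | ∃ d, 0 < d ∧ c a (a + d)}).Nonempty := ⟨a, d, hd, hcd⟩
  exact Nat.sInf_mem hne

lemma rOf_min (c : RingCon ℕ) {a d : ℕ} (hd : 0 < d) (ha : c a (a + d)) :
    rOf c ≤ a := Nat.sInf_le ⟨d, hd, ha⟩

/-- characterization of a nontrivial congruence by its invariants -/
lemma char (c : RingCon ℕ) (h : Nontriv c) {x y : ℕ} (hxy : x ≤ y) :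
    c x y ↔ x = y ∨ (rOf c ≤ x ∧ mOf c ∣ (y - x)) := by
  constructor
  · intro hc
    rcases eq_or_lt_of_le hxy with rfl | hlt
    · exact Or.inl rfl
    · right
      have hy : y = x + (y - x) := by omega
      rw [hy] at hc
      refine ⟨rOf_min c (by omega) hc, mOf_dvd c h _ (by omega) ⟨x, hc⟩⟩
  · rintro (rfl | ⟨hr, hdvd⟩)
    · exact c.refl x
    · obtain ⟨d₀, hd₀, hcr⟩ := rOf_mem c h
      have hrm : c (rOf c) (rOf c + mOf c) := key c h hd₀ hcr
      have hxm : c x (x + mOf c) := by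
        have := translate c hrm (x - rOf c)
        have e1 : rOf c + (x - rOf c) = x := by omega
        have e2 : rOf c + mOf c + (x - rOf c) = x + mOf c := by omega
        rwa [e1, e2] at this
      obtain ⟨k, hk⟩ := hdvd
      have := iterate c hxm k
      have e : x + k * mOf c = y := by
        have := Nat.mul_comm k (mOf c)
        omega
      rwa [e] at this

lemma le_of_inv (c c' : RingCon ℕ) (h : Nontriv c) (h' : Nontriv c')
    (hm : mOf c = mOf c') (hr : rOf c = rOf c') : c ≤ c' := by
  intro x y hxy
  rcases le_total x y with hle | hle
  · rcases (char c h hle).mp hxy with rfl | ⟨h1, h2⟩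
    · exact c'.refl x
    · exact (char c' h' hle).mpr (Or.inr ⟨hr ▸ h1, hm ▸ h2⟩)
  · have hxy' := c.symm hxy
    rcases (char c h hle).mp hxy' with rfl | ⟨h1, h2⟩
    · exact c'.refl _
    · exact c'.symm ((char c' h' hle).mpr (Or.inr ⟨hr ▸ h1, hm ▸ h2⟩))

lemma eq_of_inv (c c' : RingCon ℕ) (h : Nontriv c) (h' : Nontriv c')
    (hm : mOf c = mOf c') (hr : rOf c = rOf c') : c = c' :=
  le_antisymm (le_of_inv c c' h h' hm hr) (le_of_inv c' c h' h hm.symm hr.symm)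

lemma triv_eq (c c' : RingCon ℕ) (h : ¬ Nontriv c) (h' : ¬ Nontriv c') : c = c' := by
  have key : ∀ (d : RingCon ℕ), ¬ Nontriv d → ∀ x y, d x y ↔ x = y := by
    intro d hd x y
    constructor
    · intro hxy
      by_contra hne
      rcases le_or_gt x y with hle | hlt
      · have : 0 < y - x := by omega
        exact hd ⟨x, y - x, this, by rwa [show x + (y - x) = y by omega]⟩
      · have hyx := d.symm hxy
        have : 0 < x - y := by omega
        exact hd ⟨y, x - y, this, by rwa [show y + (x - y) = x by omega]⟩
    · rintro rfl; exact d.refl x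
  refine RingCon.ext fun x y => ?_
  rw [key c h x y, key c' h' x y]

lemma nontriv_mono {c c' : RingCon ℕ} (hle : c ≤ c') (h : Nontriv c) : Nontriv c' := by
  obtain ⟨a, d, hd, hcd⟩ := h
  exact ⟨a, d, hd, hle hcd⟩

lemma mOf_dvd_of_le {c c' : RingCon ℕ} (hle : c ≤ c') (h : Nontriv c) :
    mOf c' ∣ mOf c := by
  obtain ⟨hm, a, ha⟩ := mOf_mem c h
  exact mOf_dvd c' (nontriv_mono hle h) _ hm ⟨a, hle ha⟩

lemma rOf_le_of_le {c c' : RingCon ℕ} (hle : c ≤ c') (h : Nontriv c) :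
    rOf c' ≤ rOf c := by
  obtain ⟨d, hd, hcr⟩ := rOf_mem c h
  exact rOf_min c' hd (hle hcr)

end Stmt8Aux

open Stmt8Aux in
/-- `ℕ` is congruence-Noetherian: every ascending chain of semiring
congruences on `ℕ` stabilizes. -/
theorem stmt_8 (ρ : ℕ → RingCon ℕ) (hmono : ∀ n, ρ n ≤ ρ (n + 1)) :
    ∃ k, ∀ n, k ≤ n → ρ n = ρ k := by
  have mono : ∀ i j, i ≤ j → ρ i ≤ ρ j := by
    intro i j hij
    induction j with
    | zero => simp [Nat.le_zero.mp hij]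
    | succ j ih =>
      rcases Nat.lt_or_ge i (j+1) with hlt | hge
      · exact le_trans (ih (by omega)) (hmono j)
      · have : i = j + 1 := by omega
        simp [this]
  by_cases hex : ∃ n, Nontriv (ρ n)
  · obtain ⟨n₀, hn₀⟩ := hex
    have hnt : ∀ n, Nontriv (ρ (n₀ + n)) := fun n =>
      nontriv_mono (mono n₀ (n₀ + n) (by omega)) hn₀
    set f : ℕ → ℕ := fun n => mOf (ρ (n₀ + n)) + rOf (ρ (n₀ + n)) with hf
    have fanti : ∀ i j, i ≤ j → f j ≤ f i := by
      intro i j hij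
      have hle : ρ (n₀ + i) ≤ ρ (n₀ + j) := mono _ _ (by omega)
      have h1 : mOf (ρ (n₀ + j)) ∣ mOf (ρ (n₀ + i)) := mOf_dvd_of_le hle (hnt i)
      have h2 : rOf (ρ (n₀ + j)) ≤ rOf (ρ (n₀ + i)) := rOf_le_of_le hle (hnt i)
      have hmpos : 0 < mOf (ρ (n₀ + i)) := (mOf_mem _ (hnt i)).1
      have := Nat.le_of_dvd hmpos h1
      simp only [hf]
      omega
    -- find global minimum of f
    have hrange : (Set.range f).Nonempty := ⟨f 0, 0, rfl⟩
    obtain ⟨k, hk⟩ := Nat.sInf_mem hrange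
    have hmin : ∀ n, f k ≤ f n := by
      intro n
      rw [hk]
      exact Nat.sInf_le ⟨n, rfl⟩
    refine ⟨n₀ + k, ?_⟩
    intro n hn
    set j := n - n₀ with hj
    have hjk : k ≤ j := by omega
    have hnn : n = n₀ + j := by omega
    have hle : ρ (n₀ + k) ≤ ρ (n₀ + j) := mono _ _ (by omega)
    have h1 : mOf (ρ (n₀ + j)) ∣ mOf (ρ (n₀ + k)) := mOf_dvd_of_le hle (hnt k)
    have h2 : rOf (ρ (n₀ + j)) ≤ rOf (ρ (n₀ + k)) := rOf_le_of_le hle (hnt k)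
    have hmpos : 0 < mOf (ρ (n₀ + k)) := (mOf_mem _ (hnt k)).1
    have h3 := Nat.le_of_dvd hmpos h1
    have h4 : f j = f k := le_antisymm (fanti k j hjk) (hmin j)
    simp only [hf] at h4
    have hmeq : mOf (ρ (n₀ + j)) = mOf (ρ (n₀ + k)) := by omega
    have hreq : rOf (ρ (n₀ + j)) = rOf (ρ (n₀ + k)) := by omega
    rw [hnn]
    exact eq_of_inv _ _ (hnt j) (hnt k) hmeq hreq
  · push_neg at hex
    refine ⟨0, fun n _ => triv_eq _ _ (hex n) (hex 0)⟩
end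

section
/- The polynomial semiring N[x] is not congruence-Noetherian: there exists a strictly ascending infinite chain of semiring congruences on N[x]. Specifically, letting ρ_n be the congruence generated by the pairs (x^i + 1, x + 1) for 2 ≤ i ≤ n, one has ρ_1 ⊊ ρ_2 ⊊ ρ_3 ⊊ ⋯, since (x^{n+1} + 1, x + 1) ∉ ρ_n for every n ≥ 1. -/
/-!
Collapse to a single class the set `S` of polynomials lying coefficientwise above a nonzero
multiple of some `xⁱ + 1` with `1 ≤ i ≤ n`. Since `S` absorbs addition and multiplication by
nonzero polynomials and `ℕ[x]` has no zero divisors, this is a congruence containing `ρₙ`.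
Every element of `S` has nonzero coefficients in two degrees differing by some `i ∈ [1, n]`,
so `x^(n+1) + 1 ∉ S` while `x + 1 ∈ S`, and the two are not `ρₙ`-related.
-/

open Polynomial

section ReesCon

variable {R : Type*} [CommSemiring R]

/-- The semiring analogue of the Rees congruence of a semigroup ideal. -/
def reesCon (S : Set R) (add_mem : ∀ a ∈ S, ∀ b, a + b ∈ S)
    (mul_mem : ∀ a ∈ S, ∀ b, b ≠ 0 → a * b ∈ S) (zero_notMem : (0 : R) ∉ S) : RingCon R where
  r a b := a = b ∨ a ∈ S ∧ b ∈ S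
  iseqv := by
    refine ⟨fun _ => Or.inl rfl, ?_, ?_⟩
    · rintro a b (rfl | ⟨ha, hb⟩)
      exacts [Or.inl rfl, Or.inr ⟨hb, ha⟩]
    · rintro a b c (rfl | ⟨ha, hb⟩) (rfl | ⟨hb', hc⟩)
      exacts [Or.inl rfl, Or.inr ⟨hb', hc⟩, Or.inr ⟨ha, hb⟩, Or.inr ⟨ha, hc⟩]
  add' := by
    rintro a b c d (rfl | ⟨ha, hb⟩) (rfl | ⟨hc, hd⟩)
    · exact Or.inl rfl
    · rw [add_comm a c, add_comm a d]
      exact Or.inr ⟨add_mem c hc a, add_mem d hd a⟩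
    · exact Or.inr ⟨add_mem a ha c, add_mem b hb c⟩
    · exact Or.inr ⟨add_mem a ha c, add_mem b hb d⟩
  mul' := by
    rintro a b c d (rfl | ⟨ha, hb⟩) (rfl | ⟨hc, hd⟩)
    · exact Or.inl rfl
    · obtain rfl | ha := eq_or_ne a 0
      · simp
      rw [mul_comm a c, mul_comm a d]
      exact Or.inr ⟨mul_mem c hc a ha, mul_mem d hd a ha⟩
    · obtain rfl | hc := eq_or_ne c 0
      · simp
      exact Or.inr ⟨mul_mem a ha c hc, mul_mem b hb c hc⟩
    · exact Or.inr ⟨mul_mem a ha c (ne_of_mem_of_not_mem hc zero_notMem),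
        mul_mem b hb d (ne_of_mem_of_not_mem hd zero_notMem)⟩

end ReesCon

section AboveMultiples

variable {G : Set ℕ[X]} {p q : ℕ[X]}

/-- Over `ℕ`, `p = r * g + s` says that `p` lies coefficientwise above `r * g`. -/
def aboveMultiples (G : Set ℕ[X]) : Set ℕ[X] :=
  {p | ∃ g ∈ G, ∃ r ≠ 0, ∃ s, p = r * g + s}

lemma mem_aboveMultiples_of_mem (hp : p ∈ G) : p ∈ aboveMultiples G :=
  ⟨p, hp, 1, one_ne_zero, 0, by ring⟩

lemma add_mem_aboveMultiples (hp : p ∈ aboveMultiples G) (q : ℕ[X]) :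
    p + q ∈ aboveMultiples G := by
  obtain ⟨g, hg, r, hr, s, rfl⟩ := hp
  exact ⟨g, hg, r, hr, s + q, by ring⟩

lemma mul_mem_aboveMultiples (hp : p ∈ aboveMultiples G) (hq : q ≠ 0) :
    p * q ∈ aboveMultiples G := by
  obtain ⟨g, hg, r, hr, s, rfl⟩ := hp
  exact ⟨g, hg, r * q, mul_ne_zero hr hq, s * q, by ring⟩

lemma zero_notMem_aboveMultiples (hG : (0 : ℕ[X]) ∉ G) : (0 : ℕ[X]) ∉ aboveMultiples G := by
  rintro ⟨g, hg, r, hr, s, h⟩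
  have hrg : r * g ≠ 0 := mul_ne_zero hr (ne_of_mem_of_not_mem hg hG)
  refine hrg (ext fun k => ?_)
  have hk := congrArg (coeff · k) h
  simp only [coeff_add, coeff_zero] at hk ⊢
  omega

noncomputable def aboveMultiplesCon (G : Set ℕ[X]) (hG : (0 : ℕ[X]) ∉ G) : RingCon ℕ[X] :=
  reesCon (aboveMultiples G) (fun _ hp => add_mem_aboveMultiples hp)
    (fun _ hp _ hq => mul_mem_aboveMultiples hp hq) (zero_notMem_aboveMultiples hG)

lemma aboveMultiplesCon_iff (hG : (0 : ℕ[X]) ∉ G) :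
    aboveMultiplesCon G hG p q ↔ p = q ∨ p ∈ aboveMultiples G ∧ q ∈ aboveMultiples G :=
  Iff.rfl

end AboveMultiples

lemma eq_or_eq_zero_of_coeff_X_pow_add_one_ne_zero {m k : ℕ}
    (h : (X ^ m + 1 : ℕ[X]).coeff k ≠ 0) : k = m ∨ k = 0 := by
  by_contra! hk
  simp [coeff_one, coeff_X_pow, hk.1, hk.2] at h

/-- A nonzero `r * (xⁱ + 1) + s` has nonzero coefficients in degrees `deg r` and `deg r + i`. -/
lemma X_pow_add_one_notMem_aboveMultiples (m : ℕ) :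
    (X ^ m + 1 : ℕ[X]) ∉ aboveMultiples ((fun i => X ^ i + 1) '' Set.Ico 1 m) := by
  rintro ⟨_, ⟨i, ⟨hi, him⟩, rfl⟩, r, hr, s, h⟩
  have hlead : r.coeff r.natDegree ≠ 0 := mt leadingCoeff_eq_zero.mp hr
  have hexpand : (X ^ m + 1 : ℕ[X]) = r * X ^ i + r + s := by rw [h]; ring
  have htop := eq_or_eq_zero_of_coeff_X_pow_add_one_ne_zero (k := r.natDegree + i) (by
    rw [hexpand]
    simp only [coeff_add, coeff_mul_X_pow]
    omega)
  have hbot := eq_or_eq_zero_of_coeff_X_pow_add_one_ne_zero (k := r.natDegree) (by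
    rw [hexpand]
    simp only [coeff_add]
    omega)
  omega

noncomputable def ρ (n : ℕ) : RingCon ℕ[X] :=
  ringConGen fun p q => ∃ i, 2 ≤ i ∧ i ≤ n ∧ p = X ^ i + 1 ∧ q = X + 1

lemma not_ρ_X_pow_succ_add_one {n : ℕ} (hn : 1 ≤ n) : ¬ ρ n (X ^ (n + 1) + 1) (X + 1) := by
  set G : Set ℕ[X] := (fun i => X ^ i + 1) '' Set.Ico 1 (n + 1)
  have hG : (0 : ℕ[X]) ∉ G := by
    rintro ⟨i, ⟨hi, -⟩, h⟩
    exact X_pow_add_C_ne_zero hi 1 (by simpa using h)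
  have mem_of_le {i : ℕ} (hi : 1 ≤ i) (hin : i ≤ n) : X ^ i + 1 ∈ aboveMultiples G :=
    mem_aboveMultiples_of_mem ⟨i, ⟨hi, by omega⟩, rfl⟩
  have hle : ρ n ≤ aboveMultiplesCon G hG := by
    refine RingCon.ringConGen_le.mpr ?_
    rintro _ _ ⟨i, hi, hin, rfl, rfl⟩
    exact Or.inr ⟨mem_of_le (by omega) hin, by simpa using mem_of_le le_rfl hn⟩
  intro h
  rcases (aboveMultiplesCon_iff hG).mp (hle h) with heq | ⟨hmem, -⟩
  · have h1 := congrArg (coeff · 1) heq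
    simp [coeff_one, coeff_X_pow, coeff_X] at h1
    omega
  · exact X_pow_add_one_notMem_aboveMultiples (n + 1) hmem

/-- `ℕ[x]` is not congruence-Noetherian: with `ρₙ` the congruence generated by
the pairs `(xⁱ + 1, x + 1)` for `2 ≤ i ≤ n`, the chain `ρ₁ ⊊ ρ₂ ⊊ ⋯` is
strictly ascending, since `(x^(n+1) + 1, x + 1) ∉ ρₙ` for every `n ≥ 1`. -/
theorem stmt_9 :
    ∀ n : ℕ, 1 ≤ n →
      (ringConGen (fun p q : Polynomial ℕ =>
          ∃ i, 2 ≤ i ∧ i ≤ n ∧ p = X ^ i + 1 ∧ q = X + 1) <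
        ringConGen (fun p q : Polynomial ℕ =>
          ∃ i, 2 ≤ i ∧ i ≤ n + 1 ∧ p = X ^ i + 1 ∧ q = X + 1)) ∧
      ¬ (ringConGen (fun p q : Polynomial ℕ =>
          ∃ i, 2 ≤ i ∧ i ≤ n ∧ p = X ^ i + 1 ∧ q = X + 1))
          (X ^ (n + 1) + 1) (X + 1) := by
  intro n hn
  change ρ n < ρ (n + 1) ∧ ¬ ρ n (X ^ (n + 1) + 1) (X + 1)
  have hmono : ρ n ≤ ρ (n + 1) :=
    RingCon.ringConGen_mono fun _ _ ⟨i, hi, hin, hp, hq⟩ => ⟨i, hi, by omega, hp, hq⟩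
  have hgen : ρ (n + 1) (X ^ (n + 1) + 1) (X + 1) :=
    RingConGen.Rel.of _ _ ⟨n + 1, by omega, le_rfl, rfl, rfl⟩
  exact ⟨lt_of_le_not_ge hmono fun hge => not_ρ_X_pow_succ_add_one hn (hge hgen),
    not_ρ_X_pow_succ_add_one hn⟩
end

section
/- The set {m·1 + a·x + b·x^2 + c·x^3 + d·x^4 : m,a,b,c,d ∈ N, and the tuple lies in one of the families (m+1, 0, 1, 0, 0), (m, n, 0, 0, 0), (m, 0, 0, n, 0), (0, m, n, 0, 0), (0, 0, m, n, 0) for m,n ≥ 0} is a set of normal forms for the semiring N[x]/(x = 1 + x + x^2): every element of N[x] is congruent to exactly one element of this set. -/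
/-!
In `ℕ[X]` sums with, and nonzero multiples of, a nonconstant polynomial are nonconstant, so
"equal, or both nonconstant with the same value at `i`" is a congruence; since `i = 1 + i + i²`
it contains the generating relation. Conversely, `X = X + (1 + X²)` in the quotient, so
`X ^ (k + 1)` absorbs `(1 + X²) X ^ k`; whatever `X ^ m` or `X ^ (m + 2)` absorbs is absorbed by
`X ^ (m + 1)`, so every nonconstant `p` absorbs `(1 + X²) t` for all `t`. As `X² + 1` generates
the kernel of `ℤ[X] → ℤ[i]`, two nonconstant polynomials are congruent exactly when they take the
same value at `i`. The listed polynomials are the constants together with one nonconstant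
polynomial for each Gaussian integer.
-/

open Polynomial

section Absorption

variable {R : Type*} [CommSemiring R] {x : R}

theorem pow_succ_add_one_add_sq_mul_pow (hx : x = 1 + x + x ^ 2) (j k : ℕ) :
    x ^ (j + 1) + (1 + x ^ 2) * x ^ k = x ^ (j + 1) := by
  set P : ℕ → ℕ → Prop := fun n k => x ^ n + (1 + x ^ 2) * x ^ k = x ^ n
  have base (m : ℕ) : P (m + 1) m :=
    calc x ^ (m + 1) + (1 + x ^ 2) * x ^ m = x ^ m * (1 + x + x ^ 2) := by ring
      _ = x ^ (m + 1) := by rw [← hx, pow_succ]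
  have absorb_trans {a b c : R} (hab : a + b = a) (hbc : b + c = b) : a + c = a := by
    rw [← hab, add_assoc, hbc]
  -- `x ^ (m + 1)` absorbs `x ^ m + x ^ (m + 2)`, hence whatever either summand absorbs.
  have step (m k : ℕ) (h : P m k ∨ P (m + 2) k) : P (m + 1) k := by
    refine absorb_trans (base m) ?_
    rcases h with h | h
    · rw [add_mul, one_mul, add_right_comm, h]
    · rw [add_mul, one_mul, ← pow_add, add_comm 2, add_assoc, h]
  have up (i : ℕ) : P 1 k → P (i + 1) k := by
    induction i with
    | zero => exact id
    | succ i ih => exact fun h => step (i + 1) k (Or.inl (ih h))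
  have down (i : ℕ) : P (i + 1) k → P 1 k := by
    induction i with
    | zero => exact id
    | succ i ih => exact fun h => ih (step i k (Or.inr h))
  exact up j (down k (base k))

theorem pow_succ_add_one_add_sq_mul_aeval (hx : x = 1 + x + x ^ 2) (j : ℕ) (t : ℕ[X]) :
    x ^ (j + 1) + (1 + x ^ 2) * aeval x t = x ^ (j + 1) := by
  induction t using Polynomial.induction_on' with
  | add f g hf hg => rw [map_add, mul_add, ← add_assoc, hf, hg]
  | monomial n a =>
    rw [aeval_monomial, eq_natCast]
    induction a with
    | zero => simp
    | succ a ih =>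
      rw [Nat.cast_succ, add_one_mul, mul_add, ← add_assoc, ih,
        pow_succ_add_one_add_sq_mul_pow hx]

end Absorption

theorem Zsqrtd.X_sq_sub_C_dvd_of_aeval_sqrtd_eq_zero {d : ℤ} {f : ℤ[X]}
    (hf : aeval (sqrtd : ℤ√d) f = 0) : X ^ 2 - C d ∣ f := by
  have hmonic : (X ^ 2 - C d).Monic := monic_X_pow_sub_C d two_ne_zero
  rw [← modByMonic_eq_zero_iff_dvd hmonic]
  have hdeg : (X ^ 2 - C d).natDegree = 2 := natDegree_X_pow_sub_C
  have hr : (f %ₘ (X ^ 2 - C d)).natDegree ≤ 1 := by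
    have := natDegree_modByMonic_lt f hmonic fun h => by rw [h] at hdeg; simp at hdeg
    omega
  have hroot : aeval (sqrtd : ℤ√d) (X ^ 2 - C d) = 0 := by simp [sq, dmuld]
  have hr0 : aeval (sqrtd : ℤ√d) (f %ₘ (X ^ 2 - C d)) = 0 := by
    have := congrArg (aeval (sqrtd : ℤ√d)) (modByMonic_add_div f (X ^ 2 - C d))
    rwa [map_add, map_mul, hroot, zero_mul, add_zero, hf] at this
  rw [eq_X_add_C_of_natDegree_le_one hr] at hr0 ⊢
  have hre := congrArg re hr0
  have him := congrArg im hr0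
  simp only [eq_intCast, map_add, map_mul, map_intCast, aeval_X, re_add, re_mul, re_intCast,
    re_sqrtd, mul_zero, im_intCast, im_sqrtd, mul_one, add_zero, zero_add, re_zero, im_add, im_mul,
    im_zero] at hre him
  simp [hre, him]

theorem Polynomial.exists_eq_map_sub_map (g : ℤ[X]) :
    ∃ s t : ℕ[X], g = s.map (Nat.castRingHom ℤ) - t.map (Nat.castRingHom ℤ) := by
  induction g using Polynomial.induction_on' with
  | add f g hf hg =>
    obtain ⟨s, t, rfl⟩ := hf
    obtain ⟨s', t', rfl⟩ := hg
    exact ⟨s + s', t + t', by simp only [Polynomial.map_add]; ring⟩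
  | monomial n a =>
    refine ⟨monomial n a.toNat, monomial n (-a).toNat, ?_⟩
    rw [map_monomial, map_monomial, eq_natCast, eq_natCast, ← map_sub, a.toNat_sub_toNat_neg]

theorem Polynomial.exists_add_mul_eq_add_mul_of_map_dvd {p q m : ℕ[X]}
    (h : m.map (Nat.castRingHom ℤ) ∣ p.map (Nat.castRingHom ℤ) - q.map (Nat.castRingHom ℤ)) :
    ∃ t s, p + m * t = q + m * s := by
  obtain ⟨g, hg⟩ := h
  obtain ⟨s, t, rfl⟩ := g.exists_eq_map_sub_map
  refine ⟨t, s, map_injective (Nat.castRingHom ℤ) Nat.cast_injective ?_⟩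
  simp only [Polynomial.map_add, Polynomial.map_mul]
  linear_combination hg

theorem Polynomial.natDegree_add_eq_max {R : Type*} [Semiring R] [PartialOrder R]
    [CanonicallyOrderedAdd R] (p q : R[X]) :
    (p + q).natDegree = max p.natDegree q.natDegree := by
  have le_add (p q : R[X]) : p.natDegree ≤ (p + q).natDegree := by
    rcases eq_or_ne p 0 with rfl | hp
    · simp
    refine le_natDegree_of_ne_zero fun h => leadingCoeff_ne_zero.mpr hp ?_
    rw [coeff_add] at h
    exact (add_eq_zero.mp h).1
  exact natDegree_add_le p q |>.antisymm (max_le (le_add p q) (add_comm p q ▸ le_add q p))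

theorem Polynomial.natDegree_mul_pos {R : Type*} [Semiring R] [NoZeroDivisors R] {p q : R[X]}
    (hp : p ≠ 0) (hq : 0 < q.natDegree) : 0 < (p * q).natDegree := by
  rw [natDegree_mul hp (ne_zero_of_natDegree_gt hq)]
  omega

theorem Polynomial.exists_eq_add_X_pow_of_coeff_ne_zero {p : ℕ[X]} {n : ℕ} (h : p.coeff n ≠ 0) :
    ∃ u, p = u + X ^ n := by
  refine ⟨p.erase n + C (p.coeff n - 1) * X ^ n, ?_⟩
  ext k
  rcases eq_or_ne k n with rfl | hk
  · simp only [coeff_add, erase_same, coeff_C_mul_X_pow, coeff_X_pow, if_true]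
    omega
  · simp [hk]

noncomputable abbrev gaussCon : RingCon ℕ[X] := ringConGen fun a b => a = X ∧ b = 1 + X + X ^ 2

noncomputable abbrev toGaussianInt : ℕ[X] →ₐ[ℕ] GaussianInt := aeval Zsqrtd.sqrtd

theorem exists_add_mul_eq_add_mul_of_toGaussianInt_eq {p q : ℕ[X]}
    (h : toGaussianInt p = toGaussianInt q) :
    ∃ t s, p + (1 + X ^ 2) * t = q + (1 + X ^ 2) * s := by
  apply exists_add_mul_eq_add_mul_of_map_dvd
  have := Zsqrtd.X_sq_sub_C_dvd_of_aeval_sqrtd_eq_zero (d := -1)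
    (f := p.map (Nat.castRingHom ℤ) - q.map (Nat.castRingHom ℤ)) ?_
  · simpa [add_comm] using this
  · rw [map_sub, sub_eq_zero]
    exact (aeval_map_algebraMap ℤ _ p).trans (h.trans (aeval_map_algebraMap ℤ _ q).symm)

theorem gaussCon_add_one_add_sq_mul {p : ℕ[X]} (hp : 0 < p.natDegree) (t : ℕ[X]) :
    gaussCon p (p + (1 + X ^ 2) * t) := by
  obtain ⟨u, hu⟩ := exists_eq_add_X_pow_of_coeff_ne_zero (leadingCoeff_ne_zero.mpr
    (ne_zero_of_natDegree_gt hp))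
  obtain ⟨j, hj⟩ := Nat.exists_eq_add_one.mpr hp
  let mk : ℕ[X] →ₐ[ℕ] gaussCon.Quotient := gaussCon.mk'.toNatAlgHom
  have hmk (q : ℕ[X]) : mk q = aeval (mk X) q := by
    conv_lhs => rw [← aeval_X_left_apply q]
    exact (aeval_algHom_apply mk X q).symm
  have hX : mk X = 1 + mk X + mk X ^ 2 := (RingCon.eq _).mpr (RingCon.le_ringConGen _ _ ⟨rfl, rfl⟩)
  rw [← RingCon.eq]
  change mk p = mk (p + (1 + X ^ 2) * t)
  rw [hu, hj]
  simp only [map_add, map_mul, map_pow, map_one]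
  rw [hmk t, add_assoc]
  exact congrArg (mk u + ·) (pow_succ_add_one_add_sq_mul_aeval (x := mk X) hX j t).symm

noncomputable def nonconstEvalCon : RingCon ℕ[X] where
  r a b := a = b ∨ 0 < a.natDegree ∧ 0 < b.natDegree ∧ toGaussianInt a = toGaussianInt b
  iseqv := by
    refine ⟨fun _ => Or.inl rfl, ?_, ?_⟩
    · rintro a b (rfl | ⟨ha, hb, h⟩)
      exacts [Or.inl rfl, Or.inr ⟨hb, ha, h.symm⟩]
    · rintro a b c (rfl | ⟨ha, hb, hab⟩) (rfl | ⟨hb', hc, hbc⟩)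
      exacts [Or.inl rfl, Or.inr ⟨hb', hc, hbc⟩, Or.inr ⟨ha, hb, hab⟩,
        Or.inr ⟨ha, hc, hab.trans hbc⟩]
  add' := by
    rintro a b c d (rfl | ⟨ha, hb, hab⟩) (rfl | ⟨hc, hd, hcd⟩)
    · exact Or.inl rfl
    all_goals
      refine Or.inr ⟨?_, ?_, by simp [*]⟩ <;> rw [natDegree_add_eq_max] <;> omega
  mul' := by
    rintro a b c d (rfl | ⟨ha, hb, hab⟩) (rfl | ⟨hc, hd, hcd⟩)
    · exact Or.inl rfl
    · rcases eq_or_ne a 0 with rfl | ha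
      · simp
      exact Or.inr ⟨natDegree_mul_pos ha hc, natDegree_mul_pos ha hd, by simp [hcd]⟩
    · rcases eq_or_ne c 0 with rfl | hc
      · simp
      rw [mul_comm a, mul_comm b]
      exact Or.inr ⟨natDegree_mul_pos hc ha, natDegree_mul_pos hc hb, by simp [hab]⟩
    · exact Or.inr ⟨natDegree_mul_pos (ne_zero_of_natDegree_gt ha) hc,
        natDegree_mul_pos (ne_zero_of_natDegree_gt hb) hd, by simp [hab, hcd]⟩

theorem gaussCon_le_nonconstEvalCon : gaussCon ≤ nonconstEvalCon := by
  refine RingCon.ringConGen_le.mpr ?_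
  rintro _ _ ⟨rfl, rfl⟩
  refine Or.inr ⟨by simp, by rw [natDegree_add_eq_max]; simp, ?_⟩
  simp [sq, Zsqrtd.dmuld]

theorem gaussCon_iff {a b : ℕ[X]} :
    gaussCon a b ↔
      a = b ∨ 0 < a.natDegree ∧ 0 < b.natDegree ∧ toGaussianInt a = toGaussianInt b := by
  refine ⟨fun h => gaussCon_le_nonconstEvalCon h, ?_⟩
  rintro (rfl | ⟨ha, hb, h⟩)
  · exact gaussCon.refl a
  obtain ⟨t, s, hts⟩ := exists_add_mul_eq_add_mul_of_toGaussianInt_eq h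
  exact (gaussCon_add_one_add_sq_mul ha t).trans (hts ▸ (gaussCon_add_one_add_sq_mul hb s).symm)

def IsGaussNormalForm (q : ℕ[X]) : Prop :=
  (∃ m : ℕ, q = ((m + 1 : ℕ) : ℕ[X]) + X ^ 2) ∨
  (∃ m n : ℕ, q = (m : ℕ[X]) + (n : ℕ[X]) * X) ∨
  (∃ m n : ℕ, q = (m : ℕ[X]) + (n : ℕ[X]) * X ^ 3) ∨
  (∃ m n : ℕ, q = (m : ℕ[X]) * X + (n : ℕ[X]) * X ^ 2) ∨
  (∃ m n : ℕ, q = (m : ℕ[X]) * X ^ 2 + (n : ℕ[X]) * X ^ 3)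

noncomputable def gaussNormalForm (z : GaussianInt) : ℕ[X] :=
  if z.im = 0 ∧ 0 ≤ z.re then ((z.re.toNat + 1 : ℕ) : ℕ[X]) + X ^ 2
  else (z.re.toNat : ℕ[X]) + (z.im.toNat : ℕ[X]) * X + ((-z.re).toNat : ℕ[X]) * X ^ 2 +
    ((-z.im).toNat : ℕ[X]) * X ^ 3

theorem toGaussianInt_gaussNormalForm (z : GaussianInt) :
    toGaussianInt (gaussNormalForm z) = z := by
  unfold gaussNormalForm
  split_ifs with h
  · ext <;> simp [Zsqrtd.dmuld, sq, h.1, h.2]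
  · ext <;> simp [pow_succ, Zsqrtd.dmuld] <;> omega

theorem gaussNormalForm_natDegree_pos (z : GaussianInt) : 0 < (gaussNormalForm z).natDegree := by
  unfold gaussNormalForm
  split_ifs with h
  · rw [natDegree_add_eq_max]
    simp
  · by_contra! h0
    have hcoeff (k : ℕ) (hk : 0 < k) := coeff_eq_zero_of_natDegree_lt (h0.trans_lt hk)
    have h1 : z.im.toNat = 0 := by simpa [coeff_X_pow] using hcoeff 1 one_pos
    have h2 : (-z.re).toNat = 0 := by simpa [coeff_X_pow] using hcoeff 2 two_pos
    have h3 : (-z.im).toNat = 0 := by simpa [coeff_X_pow] using hcoeff 3 three_pos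
    omega

theorem isGaussNormalForm_gaussNormalForm (z : GaussianInt) :
    IsGaussNormalForm (gaussNormalForm z) := by
  unfold gaussNormalForm IsGaussNormalForm
  split_ifs with h
  · exact Or.inl ⟨_, rfl⟩
  rcases le_total 0 z.re with hre | hre <;> rcases le_total 0 z.im with him | him
  · exact Or.inr <| Or.inl
      ⟨z.re.toNat, z.im.toNat, by simp [Int.toNat_eq_zero.mpr, hre, him]⟩
  · exact Or.inr <| Or.inr <| Or.inl
      ⟨z.re.toNat, (-z.im).toNat, by simp [Int.toNat_eq_zero.mpr, hre, him]⟩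
  · exact Or.inr <| Or.inr <| Or.inr <| Or.inl
      ⟨z.im.toNat, (-z.re).toNat, by simp [Int.toNat_eq_zero.mpr, hre, him]⟩
  · exact Or.inr <| Or.inr <| Or.inr <| Or.inr
      ⟨(-z.re).toNat, (-z.im).toNat, by simp [Int.toNat_eq_zero.mpr, hre, him]⟩

theorem eq_gaussNormalForm_of_natDegree_pos {q : ℕ[X]} (hq : IsGaussNormalForm q)
    (hpos : 0 < q.natDegree) : q = gaussNormalForm (toGaussianInt q) := by
  rcases hq with ⟨m, rfl⟩ | ⟨m, n, rfl⟩ | ⟨m, n, rfl⟩ | ⟨m, n, rfl⟩ | ⟨m, n, rfl⟩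
  · simp [gaussNormalForm, sq]
  all_goals
    rcases Nat.eq_zero_or_pos n with rfl | hn
  all_goals
    simp [gaussNormalForm, pow_succ, Zsqrtd.dmuld] at hpos ⊢ <;> intros <;> simp_all

/-- Fiore–Leinster normal forms for `ℕ[x]/(x = 1 + x + x²)`: every polynomial
is congruent to exactly one element of the displayed set. -/
theorem stmt_12 :
    ∀ p : Polynomial ℕ, ∃! q : Polynomial ℕ,
      ((∃ m : ℕ, q = ((m + 1 : ℕ) : Polynomial ℕ) + X ^ 2) ∨
       (∃ m n : ℕ, q = (m : Polynomial ℕ) + (n : Polynomial ℕ) * X) ∨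
       (∃ m n : ℕ, q = (m : Polynomial ℕ) + (n : Polynomial ℕ) * X ^ 3) ∨
       (∃ m n : ℕ, q = (m : Polynomial ℕ) * X + (n : Polynomial ℕ) * X ^ 2) ∨
       (∃ m n : ℕ, q = (m : Polynomial ℕ) * X ^ 2 + (n : Polynomial ℕ) * X ^ 3)) ∧
      (ringConGen (fun a b : Polynomial ℕ => a = X ∧ b = 1 + X + X ^ 2)) p q := by
  intro p
  rcases Nat.eq_zero_or_pos p.natDegree with hp | hp
  · refine ⟨p, ⟨Or.inr (Or.inl ⟨p.coeff 0, 0, ?_⟩), gaussCon.refl p⟩, fun q ⟨_, hpq⟩ => ?_⟩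
    · simpa using eq_C_of_natDegree_eq_zero hp
    · rcases gaussCon_iff.mp hpq with h | ⟨h, -⟩
      exacts [h.symm, absurd h (by omega)]
  · refine ⟨gaussNormalForm (toGaussianInt p),
      ⟨isGaussNormalForm_gaussNormalForm _, gaussCon_iff.mpr (Or.inr ⟨hp,
        gaussNormalForm_natDegree_pos _, (toGaussianInt_gaussNormalForm _).symm⟩)⟩,
      fun q ⟨hq, hpq⟩ => ?_⟩
    obtain ⟨hq_pos, hq_eq⟩ : 0 < q.natDegree ∧ toGaussianInt q = toGaussianInt p := by
      rcases gaussCon_iff.mp hpq with rfl | ⟨-, hq_pos, h⟩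
      exacts [⟨hp, rfl⟩, ⟨hq_pos, h.symm⟩]
    rw [eq_gaussNormalForm_of_natDegree_pos hq hq_pos, hq_eq]
end

section
/- The set {n·1 + x^2 + x^4, n·1 + m·x^2, m·x^2 + t·x^4, n·1 + t·x^4 : n, m, t ∈ N} is a set of normal forms for the semiring N[x]/(x = 1 + x^2): every polynomial in N[x] is congruent to exactly one element of this set modulo the congruence generated by x = 1 + x^2. -/
/-!
In a commutative semiring with `x = 1 + x²`, the element `u = 1 + x² + x⁴ = 1 + x³` satisfies
`x * u = u` and `x² + u = (1 + x²)² = x²`; hence `x⁶ = x⁶ + u = 1 + x³ * u = 1 + u`. So every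
polynomial reduces to some `a + b x² + c x⁴`, and as long as `b + c > 0` the summand `u`, i.e. a
shift of `(a, b, c)` by `(1, 1, 1)`, is absorbed; removing as many copies of `u` as possible
leaves one of the listed forms.

For uniqueness, two semiring maps identify `x` and `1 + x²`: evaluation at a primitive sixth
root of unity (an integer `2 × 2` matrix), which reads off `a - b` and `c - b`, and evaluation at
`⊤ : ℕ∞`, which tells a constant `a` apart from a nonconstant form.
-/

open Polynomial

theorem RingCon.map_eq_of_ringConGen {R S : Type*} [Semiring R] [Semiring S]
    {r : R → R → Prop} (f : R →+* S) (hf : ∀ a b, r a b → f a = f b) {a b : R}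
    (h : ringConGen r a b) : f a = f b :=
  (ker_apply f).1 (ringConGen_le.2 (fun a b hab => (ker_apply f).2 (hf a b hab)) h)

namespace Blass

def evenQuartic {S : Type*} [Semiring S] (a b c : ℕ) (x : S) : S := a + b * x ^ 2 + c * x ^ 4

def IsNormal (a b c : ℕ) : Prop := (b = 1 ∧ c = 1) ∨ c = 0 ∨ a = 0 ∨ b = 0

noncomputable abbrev blassCon : RingCon ℕ[X] := ringConGen fun a b => a = X ∧ b = 1 + X ^ 2

theorem aeval_evenQuartic_X {S : Type*} [Semiring S] (y : S) (a b c : ℕ) :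
    aeval y (evenQuartic a b c (X : ℕ[X])) = evenQuartic a b c y := by
  simp [evenQuartic]

section Reduction

variable {S : Type*} [CommSemiring S] {x : S}

theorem one_add_sq_add_pow_four_eq (hx : x = 1 + x ^ 2) : 1 + x ^ 2 + x ^ 4 = 1 + x ^ 3 :=
  calc 1 + x ^ 2 + x ^ 4 = 1 + x ^ 2 * (1 + x ^ 2) := by ring
    _ = 1 + x ^ 3 := by rw [← hx]; ring

theorem mul_one_add_sq_add_pow_four (hx : x = 1 + x ^ 2) :
    x * (1 + x ^ 2 + x ^ 4) = 1 + x ^ 2 + x ^ 4 :=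
  calc x * (1 + x ^ 2 + x ^ 4) = x + x ^ 4 := by rw [one_add_sq_add_pow_four_eq hx]; ring
    _ = 1 + x ^ 2 + x ^ 4 := by rw [← hx]

theorem pow_mul_one_add_sq_add_pow_four (hx : x = 1 + x ^ 2) (k : ℕ) :
    x ^ k * (1 + x ^ 2 + x ^ 4) = 1 + x ^ 2 + x ^ 4 := by
  induction k with
  | zero => rw [pow_zero, one_mul]
  | succ k ih => rw [pow_succ', mul_assoc, ih, mul_one_add_sq_add_pow_four hx]

theorem pow_add_two_add_one_add_sq_add_pow_four (hx : x = 1 + x ^ 2) (k : ℕ) :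
    x ^ (k + 2) + (1 + x ^ 2 + x ^ 4) = x ^ (k + 2) :=
  calc x ^ (k + 2) + (1 + x ^ 2 + x ^ 4) = x ^ k * ((1 + x ^ 2) * (1 + x ^ 2)) := by
        rw [← pow_mul_one_add_sq_add_pow_four hx k]; ring
    _ = x ^ (k + 2) := by rw [← hx]; ring

theorem pow_six_eq (hx : x = 1 + x ^ 2) : x ^ 6 = 2 + x ^ 2 + x ^ 4 :=
  calc x ^ 6 = x ^ 6 + (1 + x ^ 2 + x ^ 4) := (pow_add_two_add_one_add_sq_add_pow_four hx 4).symm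
    _ = 1 + x ^ 3 * (1 + x ^ 3) := by rw [one_add_sq_add_pow_four_eq hx]; ring
    _ = 1 + (1 + x ^ 2 + x ^ 4) := by
        rw [← one_add_sq_add_pow_four_eq hx, pow_mul_one_add_sq_add_pow_four hx]
    _ = 2 + x ^ 2 + x ^ 4 := by ring

theorem evenQuartic_mul (hx : x = 1 + x ^ 2) (a b c : ℕ) :
    evenQuartic a b c x * x = evenQuartic (a + 2 * c) (a + b + c) (b + 2 * c) x :=
  calc evenQuartic a b c x * x = a + (a + b) * x ^ 2 + (b + c) * x ^ 4 + c * x ^ 6 := by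
        nth_rewrite 2 [hx]; unfold evenQuartic; ring
    _ = evenQuartic (a + 2 * c) (a + b + c) (b + 2 * c) x := by
        rw [pow_six_eq hx, evenQuartic]; push_cast; ring

theorem exists_aeval_eq_evenQuartic (hx : x = 1 + x ^ 2) (p : ℕ[X]) :
    ∃ a b c : ℕ, aeval x p = evenQuartic a b c x := by
  induction p using Polynomial.induction_on with
  | C n => exact ⟨n, 0, 0, by simp [evenQuartic]⟩
  | add p q hp hq =>
    obtain ⟨a, b, c, hp⟩ := hp
    obtain ⟨a', b', c', hq⟩ := hq
    refine ⟨a + a', b + b', c + c', ?_⟩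
    rw [map_add, hp, hq]
    unfold evenQuartic; push_cast; ring
  | monomial n k ih =>
    obtain ⟨a, b, c, h⟩ := ih
    refine ⟨a + 2 * c, a + b + c, b + 2 * c, ?_⟩
    rw [pow_succ, ← mul_assoc, map_mul, h, aeval_X, evenQuartic_mul hx]

theorem evenQuartic_add_one_add_sq_add_pow_four (hx : x = 1 + x ^ 2) {a b c : ℕ}
    (h : 0 < b + c) : evenQuartic a b c x + (1 + x ^ 2 + x ^ 4) = evenQuartic a b c x := by
  rcases b with _ | b
  · obtain ⟨c, rfl⟩ : ∃ c', c = c' + 1 := ⟨c - 1, by omega⟩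
    calc evenQuartic a 0 (c + 1) x + (1 + x ^ 2 + x ^ 4)
        = a + c * x ^ 4 + (x ^ (2 + 2) + (1 + x ^ 2 + x ^ 4)) := by
          unfold evenQuartic; push_cast; ring
      _ = evenQuartic a 0 (c + 1) x := by
        rw [pow_add_two_add_one_add_sq_add_pow_four hx]; unfold evenQuartic; push_cast; ring
  · calc evenQuartic a (b + 1) c x + (1 + x ^ 2 + x ^ 4)
        = a + b * x ^ 2 + c * x ^ 4 + (x ^ (0 + 2) + (1 + x ^ 2 + x ^ 4)) := by
          unfold evenQuartic; push_cast; ring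
      _ = evenQuartic a (b + 1) c x := by
        rw [pow_add_two_add_one_add_sq_add_pow_four hx]; unfold evenQuartic; push_cast; ring

theorem evenQuartic_add_add_add (hx : x = 1 + x ^ 2) {a b c : ℕ} (h : 0 < b + c) (k : ℕ) :
    evenQuartic (a + k) (b + k) (c + k) x = evenQuartic a b c x := by
  induction k with
  | zero => rfl
  | succ k ih =>
    rw [← ih, ← evenQuartic_add_one_add_sq_add_pow_four hx (a := a + k) (by omega)]
    unfold evenQuartic; push_cast; ring

theorem exists_isNormal_evenQuartic_eq (hx : x = 1 + x ^ 2) (a b c : ℕ) :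
    ∃ a' b' c', IsNormal a' b' c' ∧ evenQuartic a b c x = evenQuartic a' b' c' x := by
  by_cases h0 : b + c = 0
  · exact ⟨a, b, c, by unfold IsNormal; omega, rfl⟩
  obtain ⟨a', b', c', k, hn, rfl, rfl, rfl, hpos⟩ : ∃ a' b' c' k, IsNormal a' b' c' ∧
      a = a' + k ∧ b = b' + k ∧ c = c' + k ∧ 0 < b' + c' := by
    unfold IsNormal
    by_cases hbc : b = c ∧ b ≤ a
    · exact ⟨a - b + 1, 1, 1, b - 1, by omega⟩
    · exact ⟨a - min a (min b c), b - min a (min b c), c - min a (min b c), min a (min b c),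
        by omega⟩
  exact ⟨a', b', c', hn, evenQuartic_add_add_add hx hpos k⟩

end Reduction

theorem exists_isNormal_blassCon (p : ℕ[X]) :
    ∃ a b c, IsNormal a b c ∧ blassCon p (evenQuartic a b c X) := by
  set x : blassCon.Quotient := blassCon.mkₐ ℕ X
  have hx : x = 1 + x ^ 2 := (RingCon.eq blassCon).2 (RingCon.le_ringConGen _ _ ⟨rfl, rfl⟩)
  have hmk (q : ℕ[X]) : aeval x q = (q : blassCon.Quotient) := by
    rw [aeval_algHom_apply, aeval_X_left_apply]; rfl
  obtain ⟨a, b, c, hp⟩ := exists_aeval_eq_evenQuartic (S := blassCon.Quotient) hx p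
  obtain ⟨a', b', c', hn, h⟩ := exists_isNormal_evenQuartic_eq (S := blassCon.Quotient) hx a b c
  refine ⟨a', b', c', hn, (RingCon.eq blassCon).1 ?_⟩
  rw [← hmk, ← hmk]
  exact hp.trans (h.trans (aeval_evenQuartic_X x a' b' c').symm)

theorem aeval_eq_of_blassCon {S : Type*} [Semiring S] {x : S} (hx : x = 1 + x ^ 2)
    {p q : ℕ[X]} (h : blassCon p q) : aeval x p = aeval x q :=
  RingCon.map_eq_of_ringConGen (aeval x).toRingHom (by rintro _ _ ⟨rfl, rfl⟩; simpa using hx) h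

def ω : Matrix (Fin 2) (Fin 2) ℤ := !![0, -1; 1, 1]

theorem ω_eq : ω = 1 + ω ^ 2 := by
  simp [ω, pow_two, Matrix.one_fin_two]

theorem evenQuartic_ω (a b c : ℕ) :
    evenQuartic a b c ω = !![(a : ℤ) - b, (c : ℤ) - b; (b : ℤ) - c, (a : ℤ) - c] := by
  simp only [evenQuartic, ω, pow_succ, pow_zero, Matrix.natCast_fin_two, Matrix.one_fin_two,
    Matrix.mul_fin_two]
  ext i j
  fin_cases i <;> fin_cases j <;> simp <;> ring

theorem evenQuartic_top (a b c : ℕ) :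
    evenQuartic a b c (⊤ : ℕ∞) = if b + c = 0 then (a : ℕ∞) else ⊤ := by
  simp only [evenQuartic, ENat.top_pow two_ne_zero, ENat.top_pow four_ne_zero, ENat.mul_top',
    Nat.cast_eq_zero]
  split_ifs <;> simp_all

theorem eq_of_isNormal_of_blassCon {a b c a' b' c' : ℕ} (hn : IsNormal a b c)
    (hn' : IsNormal a' b' c') (h : blassCon (evenQuartic a b c X) (evenQuartic a' b' c' X)) :
    a = a' ∧ b = b' ∧ c = c' := by
  have hω := aeval_eq_of_blassCon ω_eq h
  have htop := aeval_eq_of_blassCon (x := (⊤ : ℕ∞)) (by simp) h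
  rw [aeval_evenQuartic_X, aeval_evenQuartic_X, evenQuartic_ω, evenQuartic_ω] at hω
  rw [aeval_evenQuartic_X, aeval_evenQuartic_X, evenQuartic_top, evenQuartic_top] at htop
  have h00 : (a : ℤ) - b = a' - b' := by simpa using congrFun (congrFun hω 0) 0
  have h01 : (c : ℤ) - b = c' - b' := by simpa using congrFun (congrFun hω 0) 1
  have hconst : (b + c = 0 ↔ b' + c' = 0) ∧ (b + c = 0 → a = a') := by
    split_ifs at htop with hbc hbc' hbc'
    · exact ⟨iff_of_true hbc hbc', fun _ => by exact_mod_cast htop⟩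
    · exact absurd htop (ENat.natCast_ne_top a)
    · exact absurd htop.symm (ENat.natCast_ne_top a')
    · exact ⟨iff_of_false hbc hbc', fun h => absurd h hbc⟩
  unfold IsNormal at hn hn'
  omega

theorem blassForm_iff (q : ℕ[X]) :
    ((∃ n : ℕ, q = (n : ℕ[X]) + X ^ 2 + X ^ 4) ∨
      (∃ n m : ℕ, q = (n : ℕ[X]) + (m : ℕ[X]) * X ^ 2) ∨
      (∃ m t : ℕ, q = (m : ℕ[X]) * X ^ 2 + (t : ℕ[X]) * X ^ 4) ∨
      (∃ n t : ℕ, q = (n : ℕ[X]) + (t : ℕ[X]) * X ^ 4)) ↔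
      ∃ a b c, IsNormal a b c ∧ q = evenQuartic a b c X := by
  constructor
  · rintro (⟨n, rfl⟩ | ⟨n, m, rfl⟩ | ⟨m, t, rfl⟩ | ⟨n, t, rfl⟩)
    · exact ⟨n, 1, 1, Or.inl ⟨rfl, rfl⟩, by simp [evenQuartic]⟩
    · exact ⟨n, m, 0, Or.inr (Or.inl rfl), by simp [evenQuartic]⟩
    · exact ⟨0, m, t, Or.inr (Or.inr (Or.inl rfl)), by simp [evenQuartic]⟩
    · exact ⟨n, 0, t, Or.inr (Or.inr (Or.inr rfl)), by simp [evenQuartic]⟩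
  · rintro ⟨a, b, c, ⟨rfl, rfl⟩ | rfl | rfl | rfl, rfl⟩
    · exact Or.inl ⟨a, by simp [evenQuartic]⟩
    · exact Or.inr (Or.inl ⟨a, b, by simp [evenQuartic]⟩)
    · exact Or.inr (Or.inr (Or.inl ⟨b, c, by simp [evenQuartic]⟩))
    · exact Or.inr (Or.inr (Or.inr ⟨a, c, by simp [evenQuartic]⟩))

end Blass

open Blass in
/-- Blass's normal forms for `ℕ[x]/(x = 1 + x²)`: every polynomial is
congruent to exactly one element of the displayed set. -/
theorem stmt_13 :
    ∀ p : Polynomial ℕ, ∃! q : Polynomial ℕ,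
      ((∃ n : ℕ, q = (n : Polynomial ℕ) + X ^ 2 + X ^ 4) ∨
       (∃ n m : ℕ, q = (n : Polynomial ℕ) + (m : Polynomial ℕ) * X ^ 2) ∨
       (∃ m t : ℕ, q = (m : Polynomial ℕ) * X ^ 2 + (t : Polynomial ℕ) * X ^ 4) ∨
       (∃ n t : ℕ, q = (n : Polynomial ℕ) + (t : Polynomial ℕ) * X ^ 4)) ∧
      (ringConGen (fun a b : Polynomial ℕ => a = X ∧ b = 1 + X ^ 2)) p q := by
  intro p
  obtain ⟨a, b, c, hn, hp⟩ := exists_isNormal_blassCon p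
  refine ⟨evenQuartic a b c X, ⟨(blassForm_iff _).2 ⟨a, b, c, hn, rfl⟩, hp⟩, ?_⟩
  rintro q ⟨hq, hpq⟩
  obtain ⟨a', b', c', hn', rfl⟩ := (blassForm_iff q).1 hq
  obtain ⟨rfl, rfl, rfl⟩ :=
    eq_of_isNormal_of_blassCon hn' hn (blassCon.trans (blassCon.symm hpq) hp)
  rfl
end

section
/- The set {(n·1 + m·x)·x^t for n,m ∈ N and 0 ≤ t ≤ 3, together with n·1 + x^3 and n·1 + m·x^4 for n,m ∈ N} is a set of normal forms for the semiring N[x]/(x = 1 + x^2). -/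
/-!
Modulo `x = 1 + x²`, every positive power of `x` absorbs the element `1 + x³`, and
`x⁵ = 1 + x⁴`. With these identities one checks that the values of normal forms are closed under
`r ↦ r + 1` and `r ↦ r * x`, so by Horner's scheme every polynomial is congruent to a normal form.

For uniqueness, evaluate at `(ω, ⊤) ∈ ℤ[ω] × ℕ∞`, where `ω` is a primitive sixth root of unity;
both coordinates satisfy `x = 1 + x²`. The value in `ℕ∞` is finite exactly on constants and then
equals them, and a nonconstant normal form `(n + m x) xᵗ` is recovered from its value
`(n + m ω) ωᵗ` by reading off the sector between `ωᵗ` and `ωᵗ⁺¹` in which that value lies.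
-/

open Polynomial QuadraticAlgebra

section Identities

variable {R : Type*} [CommSemiring R] {x : R}

theorem pow_add_pow_add_two_eq (hx : x = 1 + x ^ 2) (k : ℕ) :
    x ^ k + x ^ (k + 2) = x ^ (k + 1) := by
  calc x ^ k + x ^ (k + 2) = x ^ k * (1 + x ^ 2) := by ring
    _ = x ^ (k + 1) := by rw [← hx, pow_succ]

theorem add_pow_four_eq (hx : x = 1 + x ^ 2) : x + x ^ 4 = 1 + x ^ 3 := by
  calc x + x ^ 4 = x ^ 0 + x ^ (0 + 2) + x ^ 4 := by rw [pow_add_pow_add_two_eq hx]; ring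
    _ = 1 + (x ^ 2 + x ^ (2 + 2)) := by ring
    _ = 1 + x ^ 3 := by rw [pow_add_pow_add_two_eq hx]

theorem pow_mul_one_add_pow_three (hx : x = 1 + x ^ 2) (k : ℕ) :
    x ^ k * (1 + x ^ 3) = 1 + x ^ 3 := by
  induction k with
  | zero => ring
  | succ k ih =>
    calc x ^ (k + 1) * (1 + x ^ 3) = x ^ k * (x + x ^ 4) := by ring
      _ = 1 + x ^ 3 := by rw [add_pow_four_eq hx, ih]

theorem pow_succ_add_one_add_pow_three (hx : x = 1 + x ^ 2) (k : ℕ) :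
    x ^ (k + 1) + (1 + x ^ 3) = x ^ (k + 1) := by
  have absorb : x + (1 + x ^ 3) = x := by
    calc x + (1 + x ^ 3) = 1 + (x ^ 1 + x ^ (1 + 2)) := by ring
      _ = x := by rw [pow_add_pow_add_two_eq hx, ← hx]
  calc x ^ (k + 1) + (1 + x ^ 3) = x ^ k * (x + (1 + x ^ 3)) := by
        rw [mul_add, pow_mul_one_add_pow_three hx, pow_succ]
    _ = x ^ (k + 1) := by rw [absorb, pow_succ]

theorem pow_five_eq (hx : x = 1 + x ^ 2) : x ^ 5 = 1 + x ^ 4 := by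
  calc x ^ 5 = x ^ (4 + 1) + (1 + x ^ 3) := (pow_succ_add_one_add_pow_three hx 4).symm
    _ = 1 + (x ^ 3 + x ^ (3 + 2)) := by ring
    _ = 1 + x ^ 4 := by rw [pow_add_pow_add_two_eq hx]

end Identities

def IsNormalForm (q : ℕ[X]) : Prop :=
  (∃ n m t : ℕ, t ≤ 3 ∧ q = ((n : ℕ[X]) + (m : ℕ[X]) * X) * X ^ t) ∨
    (∃ n : ℕ, q = (n : ℕ[X]) + X ^ 3) ∨
    (∃ n m : ℕ, q = (n : ℕ[X]) + (m : ℕ[X]) * X ^ 4)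

section Existence

variable {R : Type*} [CommSemiring R] {x : R}

variable (x) in
def normalValues : Set R := aeval x '' {q | IsNormalForm q}

variable (x) in
theorem sector_mem_normalValues (n m t : ℕ) (ht : t ≤ 3) :
    ((n : R) + m * x) * x ^ t ∈ normalValues x :=
  ⟨_, Or.inl ⟨n, m, t, ht, rfl⟩, by simp⟩

variable (x) in
theorem cube_mem_normalValues (n : ℕ) : (n : R) + x ^ 3 ∈ normalValues x :=
  ⟨_, Or.inr (Or.inl ⟨n, rfl⟩), by simp⟩

variable (x) in
theorem quartic_mem_normalValues (n m : ℕ) : (n : R) + m * x ^ 4 ∈ normalValues x :=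
  ⟨_, Or.inr (Or.inr ⟨n, m, rfl⟩), by simp⟩

theorem mem_normalValues_iff {r : R} : r ∈ normalValues x ↔
    (∃ n m t : ℕ, t ≤ 3 ∧ r = ((n : R) + m * x) * x ^ t) ∨ (∃ n : ℕ, r = n + x ^ 3) ∨
      ∃ n m : ℕ, r = n + m * x ^ 4 := by
  constructor
  · rintro ⟨q, ⟨n, m, t, ht, rfl⟩ | ⟨n, rfl⟩ | ⟨n, m, rfl⟩, rfl⟩
    exacts [Or.inl ⟨n, m, t, ht, by simp⟩, Or.inr (Or.inl ⟨n, by simp⟩),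
      Or.inr (Or.inr ⟨n, m, by simp⟩)]
  · rintro (⟨n, m, t, ht, rfl⟩ | ⟨n, rfl⟩ | ⟨n, m, rfl⟩)
    exacts [sector_mem_normalValues x n m t ht, cube_mem_normalValues x n,
      quartic_mem_normalValues x n m]

theorem mul_pow_three_add_one_mem_normalValues (hx : x = 1 + x ^ 2) (m : ℕ) :
    m * x ^ 3 + 1 ∈ normalValues x := by
  match m with
  | 0 => simpa using sector_mem_normalValues x 1 0 0 (by norm_num)
  | 1 => simpa [add_comm] using cube_mem_normalValues x 1
  | m + 2 =>
    convert sector_mem_normalValues x 0 (m + 1) 2 (by norm_num) using 1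
    push_cast
    calc _ = m * x ^ 3 + (x ^ (2 + 1) + (1 + x ^ 3)) := by ring
      _ = _ := by rw [pow_succ_add_one_add_pow_three hx]; ring

theorem add_one_mem_normalValues (hx : x = 1 + x ^ 2) {r : R} (hr : r ∈ normalValues x) :
    r + 1 ∈ normalValues x := by
  rcases mem_normalValues_iff.mp hr with ⟨n, m, t, ht, rfl⟩ | ⟨n, rfl⟩ | ⟨n, m, rfl⟩
  · interval_cases t
    · convert sector_mem_normalValues x (n + 1) m 0 (by norm_num) using 1
      push_cast; ring
    · rcases m with _ | m
      · convert sector_mem_normalValues x 1 n 0 (by norm_num) using 1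
        push_cast; ring
      · convert sector_mem_normalValues x (n + 1) m 1 (by norm_num) using 1
        push_cast
        calc _ = (n * x + m * x ^ 2) + (x ^ 0 + x ^ (0 + 2)) := by ring
          _ = _ := by rw [pow_add_pow_add_two_eq hx]; ring
    · rcases n with _ | n
      · simpa [mul_assoc, ← pow_succ'] using mul_pow_three_add_one_mem_normalValues hx m
      rcases m with _ | m
      · convert sector_mem_normalValues x 1 n 1 (by norm_num) using 1
        push_cast
        calc _ = n * x ^ 2 + (x ^ 0 + x ^ (0 + 2)) := by ring
          _ = _ := by rw [pow_add_pow_add_two_eq hx]; ring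
      · convert sector_mem_normalValues x (n + 1) m 2 (by norm_num) using 1
        push_cast
        calc _ = (n * x ^ 2 + m * x ^ 3) + (x ^ (1 + 1) + (1 + x ^ 3)) := by ring
          _ = _ := by rw [pow_succ_add_one_add_pow_three hx]; ring
    · rcases m with _ | m
      · simpa using mul_pow_three_add_one_mem_normalValues hx n
      rcases n with _ | n
      · convert quartic_mem_normalValues x 1 (m + 1) using 1
        push_cast; ring
      · convert sector_mem_normalValues x n (m + 1) 3 (by norm_num) using 1
        push_cast
        calc _ = (n * x ^ 3 + m * x ^ 4) + (x ^ (3 + 1) + (1 + x ^ 3)) := by ring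
          _ = _ := by rw [pow_succ_add_one_add_pow_three hx]; ring
  · convert cube_mem_normalValues x (n + 1) using 1
    push_cast; ring
  · convert quartic_mem_normalValues x (n + 1) m using 1
    push_cast; ring

theorem add_mul_add_mul_pow_four_mem_normalValues (hx : x = 1 + x ^ 2) (a : ℕ) :
    ∀ b c : ℕ, (a : R) + b * x + c * x ^ 4 ∈ normalValues x
  | b, 0 => by simpa using sector_mem_normalValues x a b 0 (by norm_num)
  | 0, c => by simpa using quartic_mem_normalValues x a c
  | b + 1, c + 2 => by
    convert add_mul_add_mul_pow_four_mem_normalValues hx a b (c + 1) using 1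
    push_cast
    calc _ = a + b * x + (c + 1) * x ^ 4 + (x + x ^ 4) := by ring
      _ = a + b * x + c * x ^ 4 + (x ^ (3 + 1) + (1 + x ^ 3)) := by
        rw [add_pow_four_eq hx]; ring
      _ = _ := by rw [pow_succ_add_one_add_pow_three hx]; ring
  | b + 2, 1 => by
    convert sector_mem_normalValues x a (b + 1) 0 (by norm_num) using 1
    push_cast
    calc _ = a + b * x + (x ^ (0 + 1) + (x + x ^ 4)) := by ring
      _ = _ := by rw [add_pow_four_eq hx, pow_succ_add_one_add_pow_three hx]; ring
  | 1, 1 => by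
    convert cube_mem_normalValues x (a + 1) using 1
    push_cast
    calc _ = a + (x + x ^ 4) := by ring
      _ = _ := by rw [add_pow_four_eq hx]; ring

theorem mul_mem_normalValues (hx : x = 1 + x ^ 2) {r : R} (hr : r ∈ normalValues x) :
    r * x ∈ normalValues x := by
  rcases mem_normalValues_iff.mp hr with ⟨n, m, t, ht, rfl⟩ | ⟨n, rfl⟩ | ⟨n, m, rfl⟩
  · rcases Nat.lt_or_ge t 3 with ht | ht
    · simpa [mul_assoc, ← pow_succ] using sector_mem_normalValues x n m (t + 1) ht
    obtain rfl : t = 3 := by omega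
    convert quartic_mem_normalValues x m (n + m) using 1
    push_cast
    calc _ = n * x ^ 4 + m * x ^ 5 := by ring
      _ = _ := by rw [pow_five_eq hx]; ring
  · convert add_mul_add_mul_pow_four_mem_normalValues hx 0 n 1 using 1
    push_cast; ring
  · convert add_mul_add_mul_pow_four_mem_normalValues hx m n m using 1
    calc _ = n * x + m * x ^ 5 := by ring
      _ = _ := by rw [pow_five_eq hx]; ring

theorem natCast_add_mem_normalValues (hx : x = 1 + x ^ 2) {r : R} (hr : r ∈ normalValues x)
    (a : ℕ) : r + a ∈ normalValues x := by
  induction a with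
  | zero => simpa
  | succ a ih => simpa [← add_assoc] using add_one_mem_normalValues hx ih

theorem aeval_mem_normalValues (hx : x = 1 + x ^ 2) (p : ℕ[X]) :
    aeval x p ∈ normalValues x := by
  induction p using Polynomial.recOnHorner with
  | M0 => simpa using sector_mem_normalValues x 0 0 0 (by norm_num)
  | MC p a _ _ ih =>
    rw [map_add, aeval_C, eq_natCast]
    exact natCast_add_mem_normalValues hx ih a
  | MX p _ ih => simpa using mul_mem_normalValues hx ih

end Existence

theorem aeval_eq_of_ringConGen {R : Type*} [CommSemiring R] {x : R} (hx : x = 1 + x ^ 2)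
    {p q : ℕ[X]} (h : ringConGen (fun a b : ℕ[X] => a = X ∧ b = 1 + X ^ 2) p q) :
    aeval x p = aeval x q :=
  (RingCon.ringConGen_le (c := RingCon.ker (aeval x).toRingHom)).mpr
    (by rintro _ _ ⟨rfl, rfl⟩; simpa using hx) h

theorem exists_isNormalForm_ringConGen (p : ℕ[X]) :
    ∃ q, IsNormalForm q ∧ ringConGen (fun a b : ℕ[X] => a = X ∧ b = 1 + X ^ 2) p q := by
  set c := ringConGen fun a b : ℕ[X] => a = X ∧ b = 1 + X ^ 2
  have aeval_coe_X (r : ℕ[X]) : aeval ((X : ℕ[X]) : c.Quotient) r = r :=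
    RingHom.congr_fun (Polynomial.ringHom_ext (f := (aeval _).toRingHom) (g := c.mk')
      (by simp) (by simp)) r
  have hX : ((X : ℕ[X]) : c.Quotient) = 1 + (X : ℕ[X]) ^ 2 := by
    rw [← RingCon.coe_one, ← RingCon.coe_pow, ← RingCon.coe_add, RingCon.eq]
    exact RingConGen.Rel.of _ _ ⟨rfl, rfl⟩
  obtain ⟨q, hq, hpq⟩ := aeval_mem_normalValues (R := c.Quotient) hX p
  exact ⟨q, hq, (RingCon.eq c).mp (by rw [← aeval_coe_X p, ← aeval_coe_X q]; exact hpq.symm)⟩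

/-- `ℤ[ω]` with `ω² = ω - 1`, so that `ω` is a primitive sixth root of unity. -/
abbrev EisensteinInt := QuadraticAlgebra ℤ (-1) 1

theorem omega_eq_one_add_sq : (ω : EisensteinInt) = 1 + ω ^ 2 := by
  ext <;> simp [sq]

/-- Left inverse of `q ↦ q(ω)` on nonconstant normal forms: `(n + m x) xᵗ` is sent into the
sector between `ωᵗ` and `ωᵗ⁺¹`, `n + m x⁴` into the cone between `ω⁴` and `1`, and `n + x³` to
`n - 1`; the branches locate `z` among these cones. -/
noncomputable def nonconstNormalForm (z : EisensteinInt) : ℕ[X] :=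
  if 0 < z.im then
    if 0 ≤ z.re then (z.re.toNat : ℕ[X]) + (z.im.toNat : ℕ[X]) * X
    else if 0 ≤ z.re + z.im then
      (((z.re + z.im).toNat : ℕ[X]) + ((-z.re).toNat : ℕ[X]) * X) * X
    else ((z.im.toNat : ℕ[X]) + ((-(z.re + z.im)).toNat : ℕ[X]) * X) * X ^ 2
  else if 0 ≤ z.re then
    if z.im = 0 then ((z.re + 1).toNat : ℕ[X]) + X ^ 3
    else (z.re.toNat : ℕ[X]) + ((-z.im).toNat : ℕ[X]) * X ^ 4
  else (((-z.re).toNat : ℕ[X]) + ((-z.im).toNat : ℕ[X]) * X) * X ^ 3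

noncomputable def normalFormOf (v : EisensteinInt × ℕ∞) : ℕ[X] :=
  if v.2 = ⊤ then nonconstNormalForm v.1 else (v.2.toNat : ℕ[X])

theorem natCast_toNat_of_nonneg {R : Type*} [Ring R] {e : ℤ} (h : 0 ≤ e) :
    ((e.toNat : ℕ) : R) = e := by
  rw [← Int.cast_natCast, Int.toNat_of_nonneg h]

theorem IsNormalForm.nonconstNormalForm_aeval {q : ℕ[X]} (hq : IsNormalForm q)
    (hc : aeval (⊤ : ℕ∞) q = ⊤) : nonconstNormalForm (aeval (ω : EisensteinInt) q) = q := by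
  rcases hq with ⟨n, m, t, ht, rfl⟩ | ⟨n, rfl⟩ | ⟨n, m, rfl⟩ <;> [
    (interval_cases t <;> rcases n with _ | n <;> rcases m with _ | m <;> simp [pow_succ] at hc);
    rcases n with _ | n;
    (rcases m with _ | m <;> simp at hc)]
  all_goals
    simp only [nonconstNormalForm, map_add, map_mul, map_natCast, aeval_X, map_one, pow_succ,
      pow_zero, re_add, im_add, re_mul, im_mul, re_natCast, im_natCast, omega_re, omega_im,
      re_one, im_one]
    -- `omega` discards the branches whose sign conditions the value violates; in the remaining
    -- one the coefficients are compared in `ℤ[X]`, where `toNat` can be cancelled.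
    split_ifs <;> try omega
    all_goals
      apply Polynomial.map_injective (Nat.castRingHom ℤ) Nat.cast_injective
      simp (disch := omega) [natCast_toNat_of_nonneg] <;> ring

theorem IsNormalForm.eq_natCast_of_aeval_top_ne {q : ℕ[X]} (hq : IsNormalForm q)
    (hc : aeval (⊤ : ℕ∞) q ≠ ⊤) : q = ((aeval (⊤ : ℕ∞) q).toNat : ℕ[X]) := by
  rcases hq with ⟨n, m, t, ht, rfl⟩ | ⟨n, rfl⟩ | ⟨n, m, rfl⟩
  · interval_cases t <;> rcases m with _ | m <;> simp [pow_succ, ENat.mul_top'] at hc ⊢ <;>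
      simp [hc]
  · simp at hc
  · rcases m with _ | m <;> simp at hc ⊢

theorem IsNormalForm.normalFormOf_aeval {q : ℕ[X]} (hq : IsNormalForm q) :
    normalFormOf (aeval ((ω, ⊤) : EisensteinInt × ℕ∞) q) = q := by
  rw [aeval_prod_apply, normalFormOf]
  split_ifs with hc
  exacts [hq.nonconstNormalForm_aeval hc, (hq.eq_natCast_of_aeval_top_ne hc).symm]

/-- Gröbner–Shirshov normal forms for `ℕ[x]/(x = 1 + x²)`: every polynomial is
congruent to exactly one element of the displayed set. -/
theorem stmt_14 :
    ∀ p : Polynomial ℕ, ∃! q : Polynomial ℕ,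
      ((∃ n m t : ℕ, t ≤ 3 ∧
          q = ((n : Polynomial ℕ) + (m : Polynomial ℕ) * X) * X ^ t) ∨
       (∃ n : ℕ, q = (n : Polynomial ℕ) + X ^ 3) ∨
       (∃ n m : ℕ, q = (n : Polynomial ℕ) + (m : Polynomial ℕ) * X ^ 4)) ∧
      (ringConGen (fun a b : Polynomial ℕ => a = X ∧ b = 1 + X ^ 2)) p q := by
  intro p
  obtain ⟨q, hq, hpq⟩ := exists_isNormalForm_ringConGen p
  refine ⟨q, ⟨hq, hpq⟩, fun q' ⟨(hq' : IsNormalForm q'), hpq'⟩ => ?_⟩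
  have hx : ((ω, ⊤) : EisensteinInt × ℕ∞) = 1 + (ω, ⊤) ^ 2 :=
    Prod.ext omega_eq_one_add_sq (by simp)
  have hvalue := congrArg normalFormOf
    (aeval_eq_of_ringConGen hx (RingCon.trans _ (RingCon.symm _ hpq') hpq))
  exact hq'.normalFormOf_aeval.symm.trans (hvalue.trans hq.normalFormOf_aeval)
end

section
/- There is an explicit bijection between Blass's normal form set {n·1 + x^2 + x^4, n·1 + m·x^2, m·x^2 + t·x^4, n·1 + t·x^4} and the Gröbner–Shirshov normal form set {(n·1 + m·x)x^t (0 ≤ t ≤ 3), n·1 + x^3, n·1 + m·x^4} for N[x]/(x = 1 + x^2), such that corresponding elements are congruent modulo the congruence generated by x = 1 + x^2. Explicitly: n·1 + m·x ↦ (n+m)·1 + m·x^2; (n·1 + m·x)·x ↦ n·1 + (n+m)·x^2; (n·1 + m·x)·x^2 ↦ (n+m)·x^2 + m·x^4; (n·1 + m·x)·x^3 ↦ n·x^2 + (n+m)·x^4; n·1 + x^3 ↦ n·1 + x^2 + x^4; n·1 + m·x^4 ↦ n·1 + m·x^4. -/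
open Polynomial

/-- The congruence of `ℕ[x]` generated by `x = 1 + x²`. -/
noncomputable def sevenTreesCon : RingCon (Polynomial ℕ) :=
  ringConGen (fun a b : Polynomial ℕ => a = X ∧ b = 1 + X ^ 2)

/-- The Gröbner–Shirshov normal form set for `ℕ[x]/(x = 1 + x²)`. -/
def gsSet : Set (Polynomial ℕ) :=
  {p | (∃ n m t : ℕ, t ≤ 3 ∧
          p = ((n : Polynomial ℕ) + (m : Polynomial ℕ) * X) * X ^ t) ∨
       (∃ n : ℕ, p = (n : Polynomial ℕ) + X ^ 3) ∨
       (∃ n m : ℕ, p = (n : Polynomial ℕ) + (m : Polynomial ℕ) * X ^ 4)}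

/-- Blass's normal form set for `ℕ[x]/(x = 1 + x²)`. -/
def blassSet : Set (Polynomial ℕ) :=
  {p | (∃ n : ℕ, p = (n : Polynomial ℕ) + X ^ 2 + X ^ 4) ∨
       (∃ n m : ℕ, p = (n : Polynomial ℕ) + (m : Polynomial ℕ) * X ^ 2) ∨
       (∃ m t : ℕ, p = (m : Polynomial ℕ) * X ^ 2 + (t : Polynomial ℕ) * X ^ 4) ∨
       (∃ n t : ℕ, p = (n : Polynomial ℕ) + (t : Polynomial ℕ) * X ^ 4)}

/-- coefficient-based map gs → blass -/
noncomputable def gmap (p : Polynomial ℕ) : Polynomial ℕ :=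
  let a := p.coeff 0; let b := p.coeff 1; let c := p.coeff 2
  let d := p.coeff 3; let e := p.coeff 4
  if c = 0 ∧ d = 0 ∧ e = 0 then ((a + b : ℕ) : Polynomial ℕ) + (b : Polynomial ℕ) * X ^ 2
  else if a = 0 ∧ d = 0 ∧ e = 0 then (b : Polynomial ℕ) + ((b + c : ℕ) : Polynomial ℕ) * X ^ 2
  else if a = 0 ∧ b = 0 ∧ e = 0 then ((c + d : ℕ) : Polynomial ℕ) * X ^ 2 + (d : Polynomial ℕ) * X ^ 4
  else if a = 0 ∧ b = 0 ∧ c = 0 then (d : Polynomial ℕ) * X ^ 2 + ((d + e : ℕ) : Polynomial ℕ) * X ^ 4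
  else if b = 0 ∧ c = 0 ∧ d = 0 then (a : Polynomial ℕ) + (e : Polynomial ℕ) * X ^ 4
  else (a : Polynomial ℕ) + X ^ 2 + X ^ 4

lemma gval1 (n m : ℕ) :
    gmap ((n : Polynomial ℕ) + (m : Polynomial ℕ) * X)
      = ((n + m : ℕ) : Polynomial ℕ) + (m : Polynomial ℕ) * X ^ 2 := by
  simp [gmap]

lemma gval2 (n m : ℕ) :
    gmap (((n : Polynomial ℕ) + (m : Polynomial ℕ) * X) * X)
      = (n : Polynomial ℕ) + ((n + m : ℕ) : Polynomial ℕ) * X ^ 2 := by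
  rcases Nat.eq_zero_or_pos m with hm | hm
  · subst hm; simp [gmap, coeff_mul_X_pow']
  · simp [gmap, coeff_mul_X_pow', hm.ne']

lemma gval3 (n m : ℕ) :
    gmap (((n : Polynomial ℕ) + (m : Polynomial ℕ) * X) * X ^ 2)
      = ((n + m : ℕ) : Polynomial ℕ) * X ^ 2 + (m : Polynomial ℕ) * X ^ 4 := by
  rcases Nat.eq_zero_or_pos m with hm | hm
  · subst hm
    rcases Nat.eq_zero_or_pos n with hn | hn
    · subst hn; simp [gmap]
    · simp [gmap, coeff_mul_X_pow', hn.ne']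
  · simp [gmap, coeff_mul_X_pow', hm.ne']

lemma gval4 (n m : ℕ) :
    gmap (((n : Polynomial ℕ) + (m : Polynomial ℕ) * X) * X ^ 3)
      = (n : Polynomial ℕ) * X ^ 2 + ((n + m : ℕ) : Polynomial ℕ) * X ^ 4 := by
  rcases Nat.eq_zero_or_pos m with hm | hm
  · subst hm
    rcases Nat.eq_zero_or_pos n with hn | hn
    · subst hn; simp [gmap]
    · simp [gmap, coeff_mul_X_pow', hn.ne']
  · simp [gmap, coeff_mul_X_pow', hm.ne']

lemma gval5 (n : ℕ) :
    gmap ((n : Polynomial ℕ) + X ^ 3) = (n : Polynomial ℕ) + X ^ 2 + X ^ 4 := by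
  rcases Nat.eq_zero_or_pos n with hn | hn
  · subst hn; simp [gmap]
  · simp [gmap, hn.ne']

lemma gval6 (n m : ℕ) :
    gmap ((n : Polynomial ℕ) + (m : Polynomial ℕ) * X ^ 4)
      = (n : Polynomial ℕ) + (m : Polynomial ℕ) * X ^ 4 := by
  rcases Nat.eq_zero_or_pos m with hm | hm
  · subst hm; simp [gmap]
  · simp only [gmap]
    rcases Nat.eq_zero_or_pos n with hn | hn
    · subst hn; simp [hm.ne']
    · simp [hm.ne', hn.ne']

/-- coefficient-based inverse map blass → gs -/
noncomputable def hmap (p : Polynomial ℕ) : Polynomial ℕ :=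
  let a := p.coeff 0; let c := p.coeff 2; let e := p.coeff 4
  if e = 0 then
    (if c ≤ a then ((a - c : ℕ) : Polynomial ℕ) + (c : Polynomial ℕ) * X
     else (a : Polynomial ℕ) * X + ((c - a : ℕ) : Polynomial ℕ) * X ^ 2)
  else if a = 0 then
    (if e ≤ c then ((c - e : ℕ) : Polynomial ℕ) * X ^ 2 + (e : Polynomial ℕ) * X ^ 3
     else (c : Polynomial ℕ) * X ^ 3 + ((e - c : ℕ) : Polynomial ℕ) * X ^ 4)
  else if c = 0 then (a : Polynomial ℕ) + (e : Polynomial ℕ) * X ^ 4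
  else (a : Polynomial ℕ) + X ^ 3

lemma hmap_eq (p : Polynomial ℕ) (a c e : ℕ) (h0 : p.coeff 0 = a)
    (h2 : p.coeff 2 = c) (h4 : p.coeff 4 = e) :
    hmap p =
      if e = 0 then
        (if c ≤ a then ((a - c : ℕ) : Polynomial ℕ) + (c : Polynomial ℕ) * X
         else (a : Polynomial ℕ) * X + ((c - a : ℕ) : Polynomial ℕ) * X ^ 2)
      else if a = 0 then
        (if e ≤ c then ((c - e : ℕ) : Polynomial ℕ) * X ^ 2 + (e : Polynomial ℕ) * X ^ 3
         else (c : Polynomial ℕ) * X ^ 3 + ((e - c : ℕ) : Polynomial ℕ) * X ^ 4)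
      else if c = 0 then (a : Polynomial ℕ) + (e : Polynomial ℕ) * X ^ 4
      else (a : Polynomial ℕ) + X ^ 3 := by
  simp only [hmap, h0, h2, h4]

lemma hval1 (n m : ℕ) :
    hmap (((n + m : ℕ) : Polynomial ℕ) + (m : Polynomial ℕ) * X ^ 2)
      = (n : Polynomial ℕ) + (m : Polynomial ℕ) * X := by
  rw [hmap_eq _ (n + m) m 0 (by simp [coeff_mul_X_pow']) (by simp [coeff_mul_X_pow']) (by simp [coeff_mul_X_pow'])]
  rw [if_pos rfl, if_pos (by omega), Nat.add_sub_cancel]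

lemma hval2 (n m : ℕ) :
    hmap ((n : Polynomial ℕ) + ((n + m : ℕ) : Polynomial ℕ) * X ^ 2)
      = ((n : Polynomial ℕ) + (m : Polynomial ℕ) * X) * X := by
  rw [hmap_eq _ n (n + m) 0 (by simp [coeff_mul_X_pow']) (by simp [coeff_mul_X_pow']) (by simp [coeff_mul_X_pow']), if_pos rfl]
  rcases Nat.eq_zero_or_pos m with hm | hm
  · subst hm
    rw [if_pos (by omega)]
    simp [mul_comm]
  · rw [if_neg (by omega), Nat.add_sub_cancel_left]
    ring

lemma hval3 (n m : ℕ) :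
    hmap (((n + m : ℕ) : Polynomial ℕ) * X ^ 2 + (m : Polynomial ℕ) * X ^ 4)
      = ((n : Polynomial ℕ) + (m : Polynomial ℕ) * X) * X ^ 2 := by
  rw [hmap_eq _ 0 (n + m) m (by simp [coeff_mul_X_pow']) (by simp [coeff_mul_X_pow']) (by simp [coeff_mul_X_pow'])]
  rcases Nat.eq_zero_or_pos m with hm | hm
  · subst hm
    rw [if_pos rfl]
    rcases Nat.eq_zero_or_pos n with hn | hn
    · subst hn; simp
    · rw [if_neg (by omega), Nat.sub_zero]
      simp [mul_comm]
  · rw [if_neg (by omega), if_pos rfl, if_pos (by omega), Nat.add_sub_cancel]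
    ring

lemma hval4 (n m : ℕ) :
    hmap ((n : Polynomial ℕ) * X ^ 2 + ((n + m : ℕ) : Polynomial ℕ) * X ^ 4)
      = ((n : Polynomial ℕ) + (m : Polynomial ℕ) * X) * X ^ 3 := by
  rw [hmap_eq _ 0 n (n + m) (by simp [coeff_mul_X_pow']) (by simp [coeff_mul_X_pow']) (by simp [coeff_mul_X_pow'])]
  rcases Nat.eq_zero_or_pos (n + m) with hnm | hnm
  · have hn : n = 0 := by omega
    have hm : m = 0 := by omega
    subst hn; subst hm
    simp
  · rw [if_neg (by omega), if_pos rfl]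
    rcases Nat.eq_zero_or_pos m with hm | hm
    · subst hm
      rw [if_pos (by omega), Nat.add_zero, Nat.sub_self]
      simp [mul_comm]
    · rw [if_neg (by omega), Nat.add_sub_cancel_left]
      ring

lemma hval5 (n : ℕ) :
    hmap ((n : Polynomial ℕ) + X ^ 2 + X ^ 4) = (n : Polynomial ℕ) + X ^ 3 := by
  rw [hmap_eq _ n 1 1 (by simp) (by simp) (by simp), if_neg (by omega)]
  rcases Nat.eq_zero_or_pos n with hn | hn
  · subst hn
    rw [if_pos rfl, if_pos (le_refl 1), Nat.sub_self]
    simp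
  · rw [if_neg (by omega), if_neg (by omega)]

lemma hval6 (n m : ℕ) :
    hmap ((n : Polynomial ℕ) + (m : Polynomial ℕ) * X ^ 4)
      = (n : Polynomial ℕ) + (m : Polynomial ℕ) * X ^ 4 := by
  rw [hmap_eq _ n 0 m (by simp [coeff_mul_X_pow']) (by simp [coeff_mul_X_pow']) (by simp [coeff_mul_X_pow'])]
  rcases Nat.eq_zero_or_pos m with hm | hm
  · subst hm
    rw [if_pos rfl, if_pos (by omega), Nat.sub_zero]
    simp
  · rw [if_neg (by omega)]
    rcases Nat.eq_zero_or_pos n with hn | hn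
    · subst hn
      rw [if_pos rfl, if_neg (by omega), Nat.sub_zero]
      simp
    · rw [if_neg (by omega), if_pos rfl]

lemma stc_X : sevenTreesCon X (1 + X ^ 2) :=
  RingConGen.Rel.of _ _ ⟨rfl, rfl⟩

lemma con1 (n m : ℕ) :
    sevenTreesCon ((n : Polynomial ℕ) + (m : Polynomial ℕ) * X)
      (((n + m : ℕ) : Polynomial ℕ) + (m : Polynomial ℕ) * X ^ 2) := by
  have h := sevenTreesCon.add (sevenTreesCon.refl (n : Polynomial ℕ))
    (sevenTreesCon.mul (sevenTreesCon.refl ((m : Polynomial ℕ))) stc_X)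
  have e : ((n : Polynomial ℕ)) + (m : Polynomial ℕ) * (1 + X ^ 2)
      = ((n + m : ℕ) : Polynomial ℕ) + (m : Polynomial ℕ) * X ^ 2 := by
    push_cast; ring
  exact e ▸ h

lemma con2 (n m : ℕ) :
    sevenTreesCon (((n : Polynomial ℕ) + (m : Polynomial ℕ) * X) * X)
      ((n : Polynomial ℕ) + ((n + m : ℕ) : Polynomial ℕ) * X ^ 2) := by
  have h := sevenTreesCon.add
    (sevenTreesCon.mul (sevenTreesCon.refl ((n : Polynomial ℕ))) stc_X)
    (sevenTreesCon.refl ((m : Polynomial ℕ) * X ^ 2))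
  have e1 : ((n : Polynomial ℕ) + (m : Polynomial ℕ) * X) * X
      = (n : Polynomial ℕ) * X + (m : Polynomial ℕ) * X ^ 2 := by ring
  have e2 : (n : Polynomial ℕ) * (1 + X ^ 2) + (m : Polynomial ℕ) * X ^ 2
      = (n : Polynomial ℕ) + ((n + m : ℕ) : Polynomial ℕ) * X ^ 2 := by
    push_cast; ring
  exact e1 ▸ e2 ▸ h

lemma con3 (n m : ℕ) :
    sevenTreesCon (((n : Polynomial ℕ) + (m : Polynomial ℕ) * X) * X ^ 2)
      (((n + m : ℕ) : Polynomial ℕ) * X ^ 2 + (m : Polynomial ℕ) * X ^ 4) := by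
  have h := sevenTreesCon.add
    (sevenTreesCon.refl ((n : Polynomial ℕ) * X ^ 2))
    (sevenTreesCon.mul (sevenTreesCon.mul
      (sevenTreesCon.refl ((m : Polynomial ℕ))) stc_X)
      (sevenTreesCon.refl (X ^ 2 : Polynomial ℕ)))
  have e1 : ((n : Polynomial ℕ) + (m : Polynomial ℕ) * X) * X ^ 2
      = (n : Polynomial ℕ) * X ^ 2 + (m : Polynomial ℕ) * X * X ^ 2 := by ring
  have e2 : (n : Polynomial ℕ) * X ^ 2 + (m : Polynomial ℕ) * (1 + X ^ 2) * X ^ 2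
      = ((n + m : ℕ) : Polynomial ℕ) * X ^ 2 + (m : Polynomial ℕ) * X ^ 4 := by
    push_cast; ring
  exact e1 ▸ e2 ▸ h

lemma con4 (n m : ℕ) :
    sevenTreesCon (((n : Polynomial ℕ) + (m : Polynomial ℕ) * X) * X ^ 3)
      ((n : Polynomial ℕ) * X ^ 2 + ((n + m : ℕ) : Polynomial ℕ) * X ^ 4) := by
  have h := sevenTreesCon.add
    (sevenTreesCon.mul (sevenTreesCon.mul
      (sevenTreesCon.refl ((n : Polynomial ℕ))) stc_X)
      (sevenTreesCon.refl (X ^ 2 : Polynomial ℕ)))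
    (sevenTreesCon.refl ((m : Polynomial ℕ) * X ^ 4))
  have e1 : ((n : Polynomial ℕ) + (m : Polynomial ℕ) * X) * X ^ 3
      = (n : Polynomial ℕ) * X * X ^ 2 + (m : Polynomial ℕ) * X ^ 4 := by ring
  have e2 : (n : Polynomial ℕ) * (1 + X ^ 2) * X ^ 2 + (m : Polynomial ℕ) * X ^ 4
      = (n : Polynomial ℕ) * X ^ 2 + ((n + m : ℕ) : Polynomial ℕ) * X ^ 4 := by
    push_cast; ring
  exact e1 ▸ e2 ▸ h

lemma con5 (n : ℕ) :
    sevenTreesCon ((n : Polynomial ℕ) + X ^ 3)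
      ((n : Polynomial ℕ) + X ^ 2 + X ^ 4) := by
  have h := sevenTreesCon.add
    (sevenTreesCon.refl ((n : Polynomial ℕ)))
    (sevenTreesCon.mul stc_X (sevenTreesCon.refl (X ^ 2 : Polynomial ℕ)))
  have e1 : (n : Polynomial ℕ) + X ^ 3 = (n : Polynomial ℕ) + X * X ^ 2 := by ring
  have e2 : (n : Polynomial ℕ) + (1 + X ^ 2) * X ^ 2
      = (n : Polynomial ℕ) + X ^ 2 + X ^ 4 := by ring
  exact e1 ▸ e2 ▸ h

lemma pow_zero_case (n m : ℕ) :
    ((n : Polynomial ℕ) + (m : Polynomial ℕ) * X) * X ^ 0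
      = (n : Polynomial ℕ) + (m : Polynomial ℕ) * X := by
  simp

lemma mem_blass {p : Polynomial ℕ} (hp : p ∈ gsSet) : gmap p ∈ blassSet := by
  rcases hp with ⟨n, m, t, ht, rfl⟩ | ⟨n, rfl⟩ | ⟨n, m, rfl⟩
  · interval_cases t
    · rw [pow_zero_case, gval1]
      exact Or.inr (Or.inl ⟨n + m, m, rfl⟩)
    · rw [pow_one, gval2]
      exact Or.inr (Or.inl ⟨n, n + m, rfl⟩)
    · rw [gval3]
      exact Or.inr (Or.inr (Or.inl ⟨n + m, m, rfl⟩))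
    · rw [gval4]
      exact Or.inr (Or.inr (Or.inl ⟨n, n + m, rfl⟩))
  · rw [gval5]
    exact Or.inl ⟨n, rfl⟩
  · rw [gval6]
    exact Or.inr (Or.inr (Or.inr ⟨n, m, rfl⟩))

lemma hg {p : Polynomial ℕ} (hp : p ∈ gsSet) : hmap (gmap p) = p := by
  rcases hp with ⟨n, m, t, ht, rfl⟩ | ⟨n, rfl⟩ | ⟨n, m, rfl⟩
  · interval_cases t
    · rw [pow_zero_case, gval1, hval1]
    · rw [pow_one, gval2, hval2]
    · rw [gval3, hval3]
    · rw [gval4, hval4]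
  · rw [gval5, hval5]
  · rw [gval6, hval6]

lemma gs_surj {q : Polynomial ℕ} (hq : q ∈ blassSet) :
    ∃ p ∈ gsSet, gmap p = q := by
  rcases hq with ⟨n, rfl⟩ | ⟨n, m, rfl⟩ | ⟨m, t, rfl⟩ | ⟨n, t, rfl⟩
  · exact ⟨(n : Polynomial ℕ) + X ^ 3, Or.inr (Or.inl ⟨n, rfl⟩), gval5 n⟩
  · by_cases h : m ≤ n
    · refine ⟨((n - m : ℕ) : Polynomial ℕ) + (m : Polynomial ℕ) * X,
        Or.inl ⟨n - m, m, 0, by norm_num, (pow_zero_case _ _).symm⟩, ?_⟩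
      rw [gval1, Nat.sub_add_cancel h]
    · refine ⟨((n : Polynomial ℕ) + ((m - n : ℕ) : Polynomial ℕ) * X) * X,
        Or.inl ⟨n, m - n, 1, by norm_num, by rw [pow_one]⟩, ?_⟩
      have e : n + (m - n) = m := by omega
      rw [gval2, e]
  · by_cases h : t ≤ m
    · refine ⟨(((m - t : ℕ) : Polynomial ℕ) + (t : Polynomial ℕ) * X) * X ^ 2,
        Or.inl ⟨m - t, t, 2, by norm_num, rfl⟩, ?_⟩
      rw [gval3, Nat.sub_add_cancel h]
    · refine ⟨((m : Polynomial ℕ) + ((t - m : ℕ) : Polynomial ℕ) * X) * X ^ 3,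
        Or.inl ⟨m, t - m, 3, by norm_num, rfl⟩, ?_⟩
      have e : m + (t - m) = t := by omega
      rw [gval4, e]
  · exact ⟨(n : Polynomial ℕ) + (t : Polynomial ℕ) * X ^ 4,
      Or.inr (Or.inr ⟨n, t, rfl⟩), gval6 n t⟩

lemma con_all {p : Polynomial ℕ} (hp : p ∈ gsSet) : sevenTreesCon p (gmap p) := by
  rcases hp with ⟨n, m, t, ht, rfl⟩ | ⟨n, rfl⟩ | ⟨n, m, rfl⟩
  · interval_cases t
    · rw [pow_zero_case, gval1]; exact con1 n m
    · rw [pow_one, gval2]; exact (pow_one (X : Polynomial ℕ)) ▸ con2 n m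
    · rw [gval3]; exact con3 n m
    · rw [gval4]; exact con4 n m
  · rw [gval5]; exact con5 n
  · rw [gval6]; exact sevenTreesCon.refl _

/-- There is an explicit bijection between the Gröbner–Shirshov normal forms
and Blass's normal forms for `ℕ[x]/(x = 1 + x²)` carrying each element to a
congruent one, given by the displayed formulas. -/
theorem stmt_15 :
    ∃ f : gsSet → blassSet, Function.Bijective f ∧
      (∀ u : gsSet, sevenTreesCon (u : Polynomial ℕ) (f u : Polynomial ℕ)) ∧
      (∀ (n m : ℕ) (h : ((n : Polynomial ℕ) + (m : Polynomial ℕ) * X) ∈ gsSet),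
        (f ⟨_, h⟩ : Polynomial ℕ) =
          ((n + m : ℕ) : Polynomial ℕ) + (m : Polynomial ℕ) * X ^ 2) ∧
      (∀ (n m : ℕ)
          (h : ((n : Polynomial ℕ) + (m : Polynomial ℕ) * X) * X ∈ gsSet),
        (f ⟨_, h⟩ : Polynomial ℕ) =
          (n : Polynomial ℕ) + ((n + m : ℕ) : Polynomial ℕ) * X ^ 2) ∧
      (∀ (n m : ℕ)
          (h : ((n : Polynomial ℕ) + (m : Polynomial ℕ) * X) * X ^ 2 ∈ gsSet),
        (f ⟨_, h⟩ : Polynomial ℕ) =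
          ((n + m : ℕ) : Polynomial ℕ) * X ^ 2 + (m : Polynomial ℕ) * X ^ 4) ∧
      (∀ (n m : ℕ)
          (h : ((n : Polynomial ℕ) + (m : Polynomial ℕ) * X) * X ^ 3 ∈ gsSet),
        (f ⟨_, h⟩ : Polynomial ℕ) =
          (n : Polynomial ℕ) * X ^ 2 + ((n + m : ℕ) : Polynomial ℕ) * X ^ 4) ∧
      (∀ (n : ℕ) (h : (n : Polynomial ℕ) + X ^ 3 ∈ gsSet),
        (f ⟨_, h⟩ : Polynomial ℕ) = (n : Polynomial ℕ) + X ^ 2 + X ^ 4) ∧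
      (∀ (n m : ℕ)
          (h : (n : Polynomial ℕ) + (m : Polynomial ℕ) * X ^ 4 ∈ gsSet),
        (f ⟨_, h⟩ : Polynomial ℕ) =
          (n : Polynomial ℕ) + (m : Polynomial ℕ) * X ^ 4) := by
  refine ⟨fun u => ⟨gmap u.1, mem_blass u.2⟩, ⟨?_, ?_⟩, fun u => con_all u.2,
    fun n m _ => gval1 n m, fun n m _ => gval2 n m, fun n m _ => gval3 n m,
    fun n m _ => gval4 n m, fun n _ => gval5 n, fun n m _ => gval6 n m⟩
  · intro u v huv
    have h1 : gmap u.1 = gmap v.1 := congrArg Subtype.val huv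
    exact Subtype.ext (by rw [← hg u.2, ← hg v.2, h1])
  · intro v
    obtain ⟨p, hp, hgp⟩ := gs_surj v.2
    exact ⟨⟨p, hp⟩, Subtype.ext hgp⟩
end

section
/- The semigroup ring Z⟨X⟩ of the free monoid on a set X over the integers, regarded as a semiring under polynomial addition and multiplication, is isomorphic as a semiring to the quotient of the free semiring on generators X ∪ X^{-1} ∪ {1^{-1}} by the congruence generated by: x + x^{-1} = 0, 1 + 1^{-1} = 0, x^{-1}y^{-1} = xy, x y^{-1} = x^{-1} y, x^ε 1^{-1} = x^{-ε}, and 1^{-1} x^ε = x^{-ε} for all x, y ∈ X and ε = ±1. -/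
/-!
Sending `x ↦ x`, `x⁻¹ ↦ -x`, `1⁻¹ ↦ -1` respects every defining relation, so it induces a
semiring map from the quotient `Q` to `ℤ⟨X⟩`. Conversely, `1 + 1⁻¹ = 0` makes `1`, hence every
`a = a * 1`, additively invertible in `Q`, so `Q` is a ring and the universal property of `ℤ⟨X⟩`
gives `x ↦ [x]`. The two maps are mutually inverse on generators because `x⁻¹ = -x` and
`1⁻¹ = -1` hold in `Q`.
-/

/-- The defining relations of the semiring `ℤ⟨X⟩` as a quotient of the free
semiring (= free `ℕ`-algebra) on the generators `X ∪ X⁻¹ ∪ {1⁻¹}`, encoded on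
`Option (X ⊕ X)` with `some (.inl x) = x`, `some (.inr x) = x⁻¹`,
`none = 1⁻¹`:  `x + x⁻¹ = 0`, `1 + 1⁻¹ = 0`, `x⁻¹y⁻¹ = xy`, `xy⁻¹ = x⁻¹y`,
`x^ε·1⁻¹ = x^(-ε)` and `1⁻¹·x^ε = x^(-ε)` for `x, y ∈ X`, `ε = ±1`. -/
def intSemiringRel (X : Type*) :
    FreeAlgebra ℕ (Option (X ⊕ X)) → FreeAlgebra ℕ (Option (X ⊕ X)) → Prop :=
  fun p q =>
    (∃ x : X, p = FreeAlgebra.ι ℕ (some (Sum.inl x)) +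
        FreeAlgebra.ι ℕ (some (Sum.inr x)) ∧ q = 0) ∨
    (p = 1 + FreeAlgebra.ι ℕ (none : Option (X ⊕ X)) ∧ q = 0) ∨
    (∃ x y : X, p = FreeAlgebra.ι ℕ (some (Sum.inr x)) *
        FreeAlgebra.ι ℕ (some (Sum.inr y)) ∧
      q = FreeAlgebra.ι ℕ (some (Sum.inl x)) *
        FreeAlgebra.ι ℕ (some (Sum.inl y))) ∨
    (∃ x y : X, p = FreeAlgebra.ι ℕ (some (Sum.inl x)) *
        FreeAlgebra.ι ℕ (some (Sum.inr y)) ∧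
      q = FreeAlgebra.ι ℕ (some (Sum.inr x)) *
        FreeAlgebra.ι ℕ (some (Sum.inl y))) ∨
    (∃ x : X,
      (p = FreeAlgebra.ι ℕ (some (Sum.inl x)) *
          FreeAlgebra.ι ℕ (none : Option (X ⊕ X)) ∧
        q = FreeAlgebra.ι ℕ (some (Sum.inr x))) ∨
      (p = FreeAlgebra.ι ℕ (some (Sum.inr x)) *
          FreeAlgebra.ι ℕ (none : Option (X ⊕ X)) ∧
        q = FreeAlgebra.ι ℕ (some (Sum.inl x)))) ∨
    (∃ x : X,
      (p = FreeAlgebra.ι ℕ (none : Option (X ⊕ X)) *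
          FreeAlgebra.ι ℕ (some (Sum.inl x)) ∧
        q = FreeAlgebra.ι ℕ (some (Sum.inr x))) ∨
      (p = FreeAlgebra.ι ℕ (none : Option (X ⊕ X)) *
          FreeAlgebra.ι ℕ (some (Sum.inr x)) ∧
        q = FreeAlgebra.ι ℕ (some (Sum.inl x))))

/-- The negation is `a ↦ a * (-1)`. -/
noncomputable abbrev ringOfIsAddUnitOne {R : Type*} [hR : Semiring R] (h : IsAddUnit (1 : R)) :
    Ring R :=
  letI : Neg R := ⟨fun a => a * ↑(-h.addUnit)⟩
  { hR with
    zsmul := zsmulRec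
    neg_add_cancel := fun a => by
      change a * _ + a = 0
      rw [← mul_one a, mul_assoc, one_mul, ← mul_add, h.val_neg_add, mul_zero] }

theorem FreeAlgebra.ringHom_ext_nat {Y S : Type*} [Semiring S] {f g : FreeAlgebra ℕ Y →+* S}
    (h : ∀ y, f (FreeAlgebra.ι ℕ y) = g (FreeAlgebra.ι ℕ y)) : f = g :=
  congrArg AlgHom.toRingHom <|
    FreeAlgebra.hom_ext (f := f.toNatAlgHom) (g := g.toNatAlgHom) (funext h)

abbrev IntSemiringQuotient (X : Type*) := (ringConGen (intSemiringRel X)).Quotient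

namespace IntSemiringQuotient

variable {X : Type*}

noncomputable def genValue : Option (X ⊕ X) → FreeAlgebra ℤ X
  | none => -1
  | some (.inl x) => FreeAlgebra.ι ℤ x
  | some (.inr x) => -FreeAlgebra.ι ℤ x

noncomputable def eval : FreeAlgebra ℕ (Option (X ⊕ X)) →ₐ[ℕ] FreeAlgebra ℤ X :=
  FreeAlgebra.lift ℕ genValue

theorem ringConGen_le_ker_eval : ringConGen (intSemiringRel X) ≤ RingCon.ker eval.toRingHom :=
  RingCon.ringConGen_le.2 fun _ _ h => by
    obtain ⟨x, rfl, rfl⟩ | ⟨rfl, rfl⟩ | ⟨x, y, rfl, rfl⟩ | ⟨x, y, rfl, rfl⟩ |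
        ⟨x, ⟨rfl, rfl⟩ | ⟨rfl, rfl⟩⟩ | ⟨x, ⟨rfl, rfl⟩ | ⟨rfl, rfl⟩⟩ := h <;>
      simp [RingCon.ker_apply, eval, genValue]

noncomputable def toFreeAlgebra : IntSemiringQuotient X →+* FreeAlgebra ℤ X :=
  RingCon.lift _ _ ringConGen_le_ker_eval

def gen (g : Option (X ⊕ X)) : IntSemiringQuotient X :=
  ((FreeAlgebra.ι ℕ g : FreeAlgebra ℕ (Option (X ⊕ X))) : IntSemiringQuotient X)

theorem coe_eq_coe_of_rel {a b : FreeAlgebra ℕ (Option (X ⊕ X))} (h : intSemiringRel X a b) :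
    (a : IntSemiringQuotient X) = b :=
  (RingCon.eq _).2 (RingConGen.Rel.of _ _ h)

theorem one_add_gen_none : 1 + gen (X := X) none = 0 := by
  exact_mod_cast coe_eq_coe_of_rel (X := X) (Or.inr (Or.inl ⟨rfl, rfl⟩))

theorem gen_inl_add_gen_inr (x : X) : gen (some (Sum.inl x)) + gen (some (Sum.inr x)) = 0 := by
  exact_mod_cast coe_eq_coe_of_rel (Or.inl ⟨x, rfl, rfl⟩)

noncomputable instance : Ring (IntSemiringQuotient X) :=
  ringOfIsAddUnitOne (.of_add_eq_zero _ one_add_gen_none)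

noncomputable def ofFreeAlgebra : FreeAlgebra ℤ X →ₐ[ℤ] IntSemiringQuotient X :=
  FreeAlgebra.lift ℤ fun x => gen (some (Sum.inl x))

@[simp]
theorem toFreeAlgebra_gen (g : Option (X ⊕ X)) : toFreeAlgebra (gen g) = genValue g :=
  FreeAlgebra.lift_ι_apply _ _

@[simp]
theorem ofFreeAlgebra_ι (x : X) :
    ofFreeAlgebra (FreeAlgebra.ι ℤ x) = gen (X := X) (some (Sum.inl x)) :=
  FreeAlgebra.lift_ι_apply _ _

theorem toFreeAlgebra_comp_ofFreeAlgebra :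
    toFreeAlgebra.comp (ofFreeAlgebra (X := X)).toRingHom = RingHom.id _ := by
  apply RingHom.toIntAlgHom_injective
  ext x
  change toFreeAlgebra (ofFreeAlgebra (FreeAlgebra.ι ℤ x)) = FreeAlgebra.ι ℤ x
  simp [genValue]

theorem ofFreeAlgebra_comp_toFreeAlgebra :
    (ofFreeAlgebra (X := X)).toRingHom.comp toFreeAlgebra = RingHom.id _ := by
  apply RingCon.Quotient.hom_ext
  refine FreeAlgebra.ringHom_ext_nat fun g => ?_
  change ofFreeAlgebra (toFreeAlgebra (gen g)) = gen g
  rcases g with _ | x | x <;> simp only [toFreeAlgebra_gen, genValue, map_neg, map_one,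
    ofFreeAlgebra_ι]
  · exact neg_eq_of_add_eq_zero_right one_add_gen_none
  · exact neg_eq_of_add_eq_zero_right (gen_inl_add_gen_inr x)

end IntSemiringQuotient

/-- The semigroup ring `ℤ⟨X⟩` (the free `ℤ`-algebra on `X`, viewed as a
semiring) is isomorphic as a semiring to the quotient of the free semiring on
`X ∪ X⁻¹ ∪ {1⁻¹}` by the congruence generated by the relations above. -/
theorem stmt_16 (X : Type*) :
    Nonempty ((ringConGen (intSemiringRel X)).Quotient ≃+* FreeAlgebra ℤ X) :=
  ⟨.ofRingHom IntSemiringQuotient.toFreeAlgebra IntSemiringQuotient.ofFreeAlgebra.toRingHom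
    IntSemiringQuotient.toFreeAlgebra_comp_ofFreeAlgebra
    IntSemiringQuotient.ofFreeAlgebra_comp_toFreeAlgebra⟩
end

section
/- Define an ordering on the free commutative semiring Rig[x] on one generator as follows: elements of Rig[x] are finite nonempty multisets of monomials x^n (plus the additive identity θ); write u as u_1 + ... + u_n with exponents in decreasing order and compare the resulting exponent sequences lexicographically (a proper prefix being smaller). Then this ordering is a monomial ordering: it is a well-ordering, and it is compatible with both multiplication by monomials and addition of monomials (w > v implies u|_w > u|_v for any context u with one occurrence of a placeholder). -/
/-- The free commutative semiring `Rig[x]` on one generator, modelled as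
finite multisets of exponents: `θ` is the empty multiset, the monomial `xⁿ`
is `{n}`, `∘` (addition) is multiset union, and multiplication by the
monomial `xᵏ` adds `k` to every exponent. -/
abbrev RigX : Type := Multiset ℕ

/-- The sequence of exponents of `u ∈ Rig[x]` in decreasing order. -/
def descExponents (u : RigX) : List ℕ := (u.sort (· ≤ ·)).reverse

/-- The ordering on `Rig[x]`: compare the decreasing exponent sequences
lexicographically, a proper prefix being smaller. -/
def rigLt (u v : RigX) : Prop :=
  List.Lex (· < ·) (descExponents u) (descExponents v)


/-!
Comparing decreasing exponent lists lexicographically is the same as comparing multiplicity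
functions `n ↦ count n u` colexicographically, i.e. at the largest exponent where they differ.
So `rigLt` is the pullback of the order of `Colex (ℕ →₀ ℕ)` along an injection. That order is
linear, well-founded because `ℕ` is, and strictly monotone under addition; multiplying by `xᵏ`
shifts exponents by the strictly monotone map `· + k`, which preserves colex comparisons.
-/

namespace Multiset

variable {α β : Type*} [LinearOrder α] [LinearOrder β]

noncomputable def colexCount (s : Multiset α) : Colex (α →₀ ℕ) := toColex s.toFinsupp

theorem colexCount_apply (s : Multiset α) (a : α) : ofColex s.colexCount a = s.count a :=
  toFinsupp_apply s a

theorem colexCount_injective : Function.Injective (colexCount : Multiset α → Colex (α →₀ ℕ)) :=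
  toColex.injective.comp toFinsupp.injective

theorem colexCount_add (s t : Multiset α) : (s + t).colexCount = s.colexCount + t.colexCount := by
  simp only [colexCount, toFinsupp_add, toColex_add]

theorem colexCount_lt_cons_of_forall_lt {s t : Multiset α} {b : α} (hs : ∀ x ∈ s, x < b)
    (ht : ∀ x ∈ t, x ≤ b) : s.colexCount < (b ::ₘ t).colexCount := by
  refine Finsupp.Colex.lt_iff.2 ⟨b, fun j hbj => ?_, ?_⟩
  · have hjt : j ∉ b ::ₘ t := fun hj =>
      (mem_cons.1 hj).elim (fun h => hbj.ne' h) fun hj => (ht j hj).not_gt hbj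
    rw [colexCount_apply, colexCount_apply, count_eq_zero_of_notMem hjt,
      count_eq_zero_of_notMem fun hj => (hs j hj).not_gt hbj]
  · rw [colexCount_apply, colexCount_apply, count_cons_self,
      count_eq_zero_of_notMem fun hb => lt_irrefl b (hs b hb)]
    exact Nat.succ_pos _

theorem colexCount_map_lt_map {f : α → β} (hf : StrictMono f) {s t : Multiset α}
    (h : s.colexCount < t.colexCount) : (s.map f).colexCount < (t.map f).colexCount := by
  obtain ⟨i, hagree, hlt⟩ := Finsupp.Colex.lt_iff.1 h
  simp only [colexCount_apply] at hagree hlt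
  refine Finsupp.Colex.lt_iff.2 ⟨f i, fun j hij => ?_, ?_⟩
  · simp only [colexCount_apply]
    by_cases hj : ∃ m, f m = j
    · obtain ⟨m, rfl⟩ := hj
      rw [count_map_eq_count' f _ hf.injective, count_map_eq_count' f _ hf.injective,
        hagree m (hf.lt_iff_lt.1 hij)]
    · push Not at hj
      rw [count_eq_zero.2 fun hm => ?_, count_eq_zero.2 fun hm => ?_] <;>
        obtain ⟨a, -, ha⟩ := mem_map.1 hm <;> exact hj a ha
  · simpa only [colexCount_apply, count_map_eq_count' f _ hf.injective] using hlt

end Multiset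

theorem List.colexCount_lt_of_lex {α : Type*} [LinearOrder α] {l₁ l₂ : List α}
    (h₁ : l₁.Pairwise (· ≥ ·)) (h₂ : l₂.Pairwise (· ≥ ·)) (h : List.Lex (· < ·) l₁ l₂) :
    (l₁ : Multiset α).colexCount < (l₂ : Multiset α).colexCount := by
  induction h with
  | nil =>
    rw [← Multiset.cons_coe]
    exact Multiset.colexCount_lt_cons_of_forall_lt (by simp)
      fun x hx => (pairwise_cons.1 h₂).1 x (Multiset.mem_coe.1 hx)
  | rel hab =>
    rw [← Multiset.cons_coe]
    refine Multiset.colexCount_lt_cons_of_forall_lt (fun x hx => ?_)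
      fun x hx => (pairwise_cons.1 h₂).1 x (Multiset.mem_coe.1 hx)
    rcases mem_cons.1 (Multiset.mem_coe.1 hx) with rfl | hx
    · exact hab
    · exact ((pairwise_cons.1 h₁).1 x hx).trans_lt hab
  | cons _ ih =>
    rw [← Multiset.cons_coe, ← Multiset.cons_coe, ← Multiset.singleton_add,
      ← Multiset.singleton_add, Multiset.colexCount_add, Multiset.colexCount_add]
    exact add_lt_add_right (ih (pairwise_cons.1 h₁).2 (pairwise_cons.1 h₂).2) _

theorem coe_descExponents (u : RigX) : (descExponents u : Multiset ℕ) = u := by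
  rw [descExponents, Multiset.coe_reverse, Multiset.sort_eq]

theorem pairwise_descExponents (u : RigX) : (descExponents u).Pairwise (· ≥ ·) :=
  List.pairwise_reverse.2 (Multiset.pairwise_sort u (· ≤ ·))

theorem rigLt_iff_colexCount_lt (u v : RigX) : rigLt u v ↔ u.colexCount < v.colexCount := by
  have hlt : ∀ {u v : RigX}, rigLt u v → u.colexCount < v.colexCount := fun {u v} h => by
    simpa only [coe_descExponents] using
      List.colexCount_lt_of_lex (pairwise_descExponents u) (pairwise_descExponents v) h
  refine ⟨hlt, fun h => ?_⟩
  by_contra hnot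
  by_cases hvu : rigLt v u
  · exact lt_asymm h (hlt hvu)
  · have heq := List.lex_trichotomous (fun x y hxy hyx => le_antisymm (not_lt.1 hyx) (not_lt.1 hxy))
      hvu hnot
    rw [← coe_descExponents u, ← coe_descExponents v, heq] at h
    exact lt_irrefl _ h

/-- The ordering `rigLt` is a monomial ordering on `Rig[x]`: it is a
well-order, and `v < w` implies `u|_v < u|_w` for every `⋆`-monomial context
`u` (i.e. `xᵏ·v + u' < xᵏ·w + u'` for every monomial `xᵏ` and `u' ∈ Rig[x]`). -/
theorem stmt_17 :
    IsWellOrder RigX rigLt ∧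
    ∀ v w : RigX, rigLt v w → ∀ (k : ℕ) (u : RigX),
      rigLt (Multiset.map (· + k) v + u) (Multiset.map (· + k) w + u) := by
  let embedding : rigLt ↪r (· < · : Colex (ℕ →₀ ℕ) → _ → Prop) :=
    ⟨⟨_, Multiset.colexCount_injective⟩, (rigLt_iff_colexCount_lt _ _).symm⟩
  refine ⟨embedding.isWellOrder, fun v w hvw k u => ?_⟩
  rw [rigLt_iff_colexCount_lt] at hvw ⊢
  rw [Multiset.colexCount_add, Multiset.colexCount_add]
  exact add_lt_add_left (Multiset.colexCount_map_lt_map add_left_strictMono hvw) _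
end

section
/- In the quotient semiring N[x]/(x = 1 + x^2), distinct elements of the set {n·1 + m·x^2 : n, m ∈ N} remain distinct; i.e., the map (n,m) ↦ class of n·1 + m·x^2 is injective from N × N into N[x]/(x = 1 + x^2). -/
open Polynomial

noncomputable def omg : ℂ := ⟨1/2, Real.sqrt 3 / 2⟩

lemma omg_sq : omg ^ 2 = ⟨-(1/2), Real.sqrt 3 / 2⟩ := by
  have h3 : Real.sqrt 3 * Real.sqrt 3 = 3 := Real.mul_self_sqrt (by norm_num)
  rw [sq, omg]
  apply Complex.ext <;> simp [Complex.mul_re, Complex.mul_im] <;> nlinarith [h3]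

lemma omg_eq : omg = 1 + omg ^ 2 := by
  rw [omg_sq]
  apply Complex.ext <;> simp [omg] <;> norm_num

lemma eval_respects {p q : Polynomial ℕ}
    (h : ringConGen (fun p q : Polynomial ℕ => p = X ∧ q = 1 + X ^ 2) p q) :
    aeval omg p = aeval omg q := by
  induction h with
  | of p q h => rcases h with ⟨hp, hq⟩; subst hp; subst hq; simpa using omg_eq
  | refl => rfl
  | symm _ ih => exact ih.symm
  | trans _ _ ih1 ih2 => exact ih1.trans ih2
  | add _ _ ih1 ih2 => rw [map_add, map_add, ih1, ih2]
  | mul _ _ ih1 ih2 => rw [map_mul, map_mul, ih1, ih2]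

/-- In `ℕ[x]/(x = 1 + x²)`, the classes of the elements `n·1 + m·x²` are
pairwise distinct: the map `(n, m) ↦ [n + m·x²]` is injective. -/
theorem stmt_19 :
    ∀ n m n' m' : ℕ,
      (ringConGen (fun p q : Polynomial ℕ => p = X ∧ q = 1 + X ^ 2))
        ((n : Polynomial ℕ) + (m : Polynomial ℕ) * X ^ 2)
        ((n' : Polynomial ℕ) + (m' : Polynomial ℕ) * X ^ 2) →
      n = n' ∧ m = m' := by
  intro n m n' m' h
  have he := eval_respects h
  simp only [map_add, map_mul, map_pow, map_natCast, aeval_X] at he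
  have him := congrArg Complex.im he
  have hre := congrArg Complex.re he
  have h3 : Real.sqrt 3 ≠ 0 := by positivity
  simp [omg_sq, Complex.add_im, Complex.mul_im, Complex.add_re, Complex.mul_re] at him hre
  subst him
  refine ⟨?_, rfl⟩
  have hn : (n : ℝ) = n' := by linarith
  exact_mod_cast hn
end
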